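/- arXiv:2004.03885 — 4 statements merged into one kernel-verified Lean document; each statement's English description precedes it below -/
import Mathlib

section
/- Let d ≥ 2, m ≥ 1 and let ω = (ω_n)_{n≥0} be a sequence of surjective group homomorphisms ω_n : (ZMod d)^m → ZMod d. For every ξ ∈ X^ℕ, the orbit of ξ under the spinal group G_ω equals the cofinality class Cof(ξ). -/
open MeasureTheory

noncomputable section

/-- The boundary of the `d`-regular rooted tree: infinite words over `X = {0,…,d-1}`,
identified with `ZMod d`. -/
abbrev Bd (d : ℕ) : Type := ℕ → ZMod d
/-- The rooted automorphism `a`: adds 1 (mod `d`) to the first letter. -/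
def aMap (d : ℕ) (ξ : Bd d) : Bd d := fun n => if n = 0 then ξ 0 + 1 else ξ n

open scoped Classical in
/-- The spinal automorphism `b_ω`: if `ξ` starts with `(d-1)^r 0`, add `ω r b` to the
letter at position `r + 1`; otherwise fix `ξ`. -/
def bMap (d m : ℕ) (ω : ℕ → ((Fin m → ZMod d) →+ ZMod d)) (b : Fin m → ZMod d)
    (ξ : Bd d) : Bd d := fun n =>
  if n ≠ 0 ∧ (∀ i, i < n - 1 → ξ i = (d : ZMod d) - 1) ∧ ξ (n - 1) = 0 then
    ξ n + ω (n - 1) b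
  else ξ n
/-- The spinal generating set `S = {a^j : 1 ≤ j ≤ d-1} ∪ {b_ω : b ∈ B ∖ {0}}`,
as a set of self-maps of the boundary. -/
def genSet (d m : ℕ) (ω : ℕ → ((Fin m → ZMod d) →+ ZMod d)) : Set (Bd d → Bd d) :=
  {f | ∃ j, 1 ≤ j ∧ j ≤ d - 1 ∧ f = (aMap d)^[j]} ∪ {f | ∃ b, b ≠ 0 ∧ f = bMap d m ω b}
/-- Two boundary points are cofinal if they agree at all sufficiently large positions. -/
def Cofinal {d : ℕ} (ξ η : Bd d) : Prop := ∃ N, ∀ n, N ≤ n → ξ n = η n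

/-- The cofinality class of `ξ`. -/
def Cof {d : ℕ} (ξ : Bd d) : Set (Bd d) := {η | Cofinal ξ η}

theorem self_mem_Cof {d : ℕ} (ξ : Bd d) : ξ ∈ Cof ξ := ⟨0, fun _ _ => rfl⟩

/-- The spinal generators, as permutations of the boundary. -/
def genPerm (d m : ℕ) (ω : ℕ → ((Fin m → ZMod d) →+ ZMod d)) : Set (Equiv.Perm (Bd d)) :=
  {π | ⇑π ∈ genSet d m ω}

/-- The spinal group `G_ω`, the group of permutations of the boundary generated by the
spinal generating set `S`. -/
def spinalGroup (d m : ℕ) (ω : ℕ → ((Fin m → ZMod d) →+ ZMod d)) :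
    Subgroup (Equiv.Perm (Bd d)) :=
  Subgroup.closure (genPerm d m ω)

/-! A generator changes at most one letter of a word, so it preserves cofinality classes.
Conversely, two cofinal words are joined by correcting letters from the last differing position
down. Position `0` is set by a power of `a`. To set position `r + 1`, move the word by induction
(without touching later letters) to one beginning with `(d-1)^r 0`; there `b_ω` adds `ω_r(b)` at
position `r + 1`, an arbitrary letter since `ω_r` is onto; then repair the first `r + 1` letters,
again by induction. -/

lemma Subgroup.rel_smul_of_mem_closure {G α : Type*} [Group G] [MulAction G α]
    {r : α → α → Prop} (hr : Equivalence r) {S : Set G} (hS : ∀ s ∈ S, ∀ x : α, r x (s • x))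
    {g : G} (hg : g ∈ Subgroup.closure S) (x : α) : r x (g • x) := by
  induction hg using Subgroup.closure_induction generalizing x with
  | mem s hs => exact hS s hs x
  | one => simpa using hr.refl x
  | mul g h _ _ ihg ihh => exact hr.trans (ihh x) (mul_smul g h x ▸ ihg (h • x))
  | inv g _ ih => simpa using hr.symm (ih (g⁻¹ • x))

section

variable {d m : ℕ}

lemma cofinal_equivalence : Equivalence (@Cofinal d) where
  refl _ := ⟨0, fun _ _ => rfl⟩
  symm := fun ⟨N, h⟩ => ⟨N, fun n hn => (h n hn).symm⟩
  trans := fun ⟨M, h₁⟩ ⟨N, h₂⟩ =>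
    ⟨max M N, fun n hn => (h₁ n (le_of_max_le_left hn)).trans (h₂ n (le_of_max_le_right hn))⟩

lemma cofinal_update (ξ : Bd d) (p : ℕ) (c : ZMod d) : Cofinal ξ (Function.update ξ p c) :=
  ⟨p + 1, fun _ hn => (Function.update_of_ne (by omega) _ _).symm⟩

lemma aMap_eq_update (ξ : Bd d) : aMap d ξ = Function.update ξ 0 (ξ 0 + 1) := by
  funext n
  rcases n with _ | n <;> simp [aMap]

lemma aMap_iterate (k : ℕ) (ξ : Bd d) :
    (aMap d)^[k] ξ = Function.update ξ 0 (ξ 0 + k) := by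
  induction k with
  | zero => simp
  | succ k ih => simp [Function.iterate_succ_apply', ih, aMap_eq_update, add_assoc]

def aPerm (d : ℕ) : Equiv.Perm (Bd d) where
  toFun := aMap d
  invFun ξ := Function.update ξ 0 (ξ 0 - 1)
  left_inv ξ := by simp [aMap_eq_update]
  right_inv ξ := by simp [aMap_eq_update]

-- `ξ` begins with the word `(d-1)^r 0`, recalling `d - 1 = -1` in `ZMod d`.
def HasSpinePrefix (ξ : Bd d) (r : ℕ) : Prop := (∀ i < r, ξ i = -1) ∧ ξ r = 0

lemma HasSpinePrefix.unique [Fact (1 < d)] {ξ : Bd d} {r s : ℕ} (hr : HasSpinePrefix ξ r)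
    (hs : HasSpinePrefix ξ s) : r = s := by
  by_contra hne
  rcases Nat.lt_or_gt_of_ne hne with h | h
  · exact neg_ne_zero.2 one_ne_zero ((hs.1 r h).symm.trans hr.2)
  · exact neg_ne_zero.2 one_ne_zero ((hr.1 s h).symm.trans hs.2)

lemma hasSpinePrefix_update {ξ : Bd d} {r p : ℕ} (hrp : r < p) (c : ZMod d) :
    HasSpinePrefix (Function.update ξ p c) r ↔ HasSpinePrefix ξ r := by
  have h : ∀ i ≤ r, Function.update ξ p c i = ξ i := fun i hi =>
    Function.update_of_ne (by omega) _ _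
  unfold HasSpinePrefix
  rw [h r le_rfl]
  exact and_congr_left' (forall₂_congr fun i hi => by rw [h i hi.le])

variable {ω : ℕ → ((Fin m → ZMod d) →+ ZMod d)}

lemma bMap_apply_zero (b : Fin m → ZMod d) (ξ : Bd d) : bMap d m ω b ξ 0 = ξ 0 := by
  simp [bMap]

open scoped Classical in
lemma bMap_apply_succ (b : Fin m → ZMod d) (ξ : Bd d) (r : ℕ) :
    bMap d m ω b ξ (r + 1) = if HasSpinePrefix ξ r then ξ (r + 1) + ω r b else ξ (r + 1) := by
  simp only [bMap, ne_eq, Nat.add_one_ne_zero, not_false_eq_true, true_and, Nat.add_sub_cancel,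
    ZMod.natCast_self, zero_sub]
  exact if_congr Iff.rfl rfl rfl

lemma bMap_eq_update [Fact (1 < d)] (b : Fin m → ZMod d) {ξ : Bd d} {r : ℕ}
    (h : HasSpinePrefix ξ r) :
    bMap d m ω b ξ = Function.update ξ (r + 1) (ξ (r + 1) + ω r b) := by
  funext n
  rcases n with _ | s
  · simp [bMap_apply_zero]
  · rw [bMap_apply_succ]
    by_cases hs : s = r
    · subst hs
      simp [h]
    · have : ¬ HasSpinePrefix ξ s := fun h' => hs (h'.unique h)
      simp [this, hs]

lemma bMap_eq_self (b : Fin m → ZMod d) {ξ : Bd d} (h : ∀ r, ¬ HasSpinePrefix ξ r) :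
    bMap d m ω b ξ = ξ := by
  funext n
  rcases n with _ | s
  · exact bMap_apply_zero b ξ
  · simp [bMap_apply_succ, h]

lemma bMap_zero (ξ : Bd d) : bMap d m ω 0 ξ = ξ := by
  funext n
  rcases n with _ | r
  · exact bMap_apply_zero 0 ξ
  · simp [bMap_apply_succ]

lemma bMap_neg_bMap [Fact (1 < d)] (b : Fin m → ZMod d) (ξ : Bd d) :
    bMap d m ω (-b) (bMap d m ω b ξ) = ξ := by
  by_cases h : ∃ r, HasSpinePrefix ξ r
  · obtain ⟨r, hr⟩ := h
    rw [bMap_eq_update b hr, bMap_eq_update (-b) ((hasSpinePrefix_update (lt_add_one r) _).2 hr)]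
    simp
  · rw [bMap_eq_self b (not_exists.mp h), bMap_eq_self (-b) (not_exists.mp h)]

def bPerm [Fact (1 < d)] (ω : ℕ → ((Fin m → ZMod d) →+ ZMod d)) (b : Fin m → ZMod d) :
    Equiv.Perm (Bd d) where
  toFun := bMap d m ω b
  invFun := bMap d m ω (-b)
  left_inv := bMap_neg_bMap b
  right_inv ξ := by simpa using bMap_neg_bMap (ω := ω) (-b) ξ

lemma cofinal_bMap [Fact (1 < d)] (b : Fin m → ZMod d) (ξ : Bd d) :
    Cofinal ξ (bMap d m ω b ξ) := by
  by_cases h : ∃ r, HasSpinePrefix ξ r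
  · obtain ⟨r, hr⟩ := h
    rw [bMap_eq_update b hr]
    exact cofinal_update ξ _ _
  · rw [bMap_eq_self b (not_exists.mp h)]
    exact cofinal_equivalence.refl ξ

lemma aPerm_mem_spinalGroup [Fact (1 < d)] : aPerm d ∈ spinalGroup d m ω :=
  Subgroup.subset_closure <| Or.inl ⟨1, le_rfl, Nat.le_sub_one_of_lt Fact.out, rfl⟩

lemma bPerm_mem_spinalGroup [Fact (1 < d)] (b : Fin m → ZMod d) :
    bPerm ω b ∈ spinalGroup d m ω := by
  obtain rfl | hb := eq_or_ne b 0
  · convert (spinalGroup d m ω).one_mem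
    exact Equiv.ext bMap_zero
  · exact Subgroup.subset_closure <| Or.inr ⟨b, hb, rfl⟩

lemma cofinal_apply_of_mem_spinalGroup [Fact (1 < d)] {g : Equiv.Perm (Bd d)}
    (hg : g ∈ spinalGroup d m ω) (ξ : Bd d) : Cofinal ξ (g ξ) := by
  refine Subgroup.rel_smul_of_mem_closure cofinal_equivalence (fun s hs ξ => ?_) hg ξ
  rcases hs with ⟨j, -, -, hs⟩ | ⟨b, -, hs⟩ <;> rw [Equiv.Perm.smul_def, hs]
  · rw [aMap_iterate]
    exact cofinal_update ξ _ _
  · exact cofinal_bMap b ξ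

lemma update_zero_mem_orbit [Fact (1 < d)] (ξ : Bd d) (c : ZMod d) :
    Function.update ξ 0 c ∈ MulAction.orbit (spinalGroup d m ω) ξ := by
  refine ⟨⟨aPerm d ^ (c - ξ 0).val, pow_mem aPerm_mem_spinalGroup _⟩, ?_⟩
  change (aMap d)^[_] ξ = _
  rw [aMap_iterate, ZMod.natCast_zmod_val, add_sub_cancel]

lemma update_succ_mem_orbit [Fact (1 < d)] {r : ℕ} (hsurj : Function.Surjective (ω r))
    {ξ : Bd d} (h : HasSpinePrefix ξ r) (c : ZMod d) :
    Function.update ξ (r + 1) c ∈ MulAction.orbit (spinalGroup d m ω) ξ := by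
  obtain ⟨b, hb⟩ := hsurj (c - ξ (r + 1))
  refine ⟨⟨bPerm ω b, bPerm_mem_spinalGroup b⟩, ?_⟩
  change bMap d m ω b ξ = _
  rw [bMap_eq_update b h, hb, add_sub_cancel]

def withSpinePrefix (r : ℕ) (ξ : Bd d) : Bd d :=
  fun i => if i < r then -1 else if i = r then 0 else ξ i

lemma hasSpinePrefix_withSpinePrefix (r : ℕ) (ξ : Bd d) :
    HasSpinePrefix (withSpinePrefix r ξ) r :=
  ⟨fun i hi => if_pos hi, by simp [withSpinePrefix]⟩

lemma withSpinePrefix_apply_of_lt {r n : ℕ} (hn : r < n) (ξ : Bd d) :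
    withSpinePrefix r ξ n = ξ n := by
  simp [withSpinePrefix, hn.not_gt, hn.ne']

lemma update_mem_orbit_of_forall_tail [Fact (1 < d)] (hsurj : ∀ n, Function.Surjective (ω n))
    {N : ℕ} (ih : ∀ ξ η : Bd d, (∀ n, N ≤ n → ξ n = η n) →
      η ∈ MulAction.orbit (spinalGroup d m ω) ξ) (ξ : Bd d) (c : ZMod d) :
    Function.update ξ N c ∈ MulAction.orbit (spinalGroup d m ω) ξ := by
  cases N with
  | zero => exact update_zero_mem_orbit ξ c
  | succ r =>
    set ζ := withSpinePrefix r ξ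
    have h₁ : ζ ∈ MulAction.orbit (spinalGroup d m ω) ξ :=
      ih ξ ζ fun n hn => (withSpinePrefix_apply_of_lt hn ξ).symm
    have h₂ := update_succ_mem_orbit (hsurj r) (hasSpinePrefix_withSpinePrefix r ξ) c
    have h₃ : Function.update ξ (r + 1) c ∈
        MulAction.orbit (spinalGroup d m ω) (Function.update ζ (r + 1) c) := by
      refine ih _ _ fun n hn => ?_
      obtain rfl | hlt := hn.eq_or_lt
      · simp
      · simp [Function.update_of_ne hlt.ne', ζ,
          withSpinePrefix_apply_of_lt (r.lt_succ_self.trans hlt)]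
    rwa [MulAction.orbit_eq_iff.2 h₂, MulAction.orbit_eq_iff.2 h₁] at h₃

lemma mem_orbit_of_forall_ge_eq [Fact (1 < d)] (hsurj : ∀ n, Function.Surjective (ω n)) (N : ℕ)
    {ξ η : Bd d} (h : ∀ n, N ≤ n → ξ n = η n) : η ∈ MulAction.orbit (spinalGroup d m ω) ξ := by
  induction N generalizing ξ η with
  | zero =>
    rw [← funext fun n => h n n.zero_le]
    exact MulAction.mem_orbit_self ξ
  | succ N ih =>
    have h₁ := update_mem_orbit_of_forall_tail hsurj (fun _ _ => ih) ξ (η N)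
    have h₂ : η ∈ MulAction.orbit (spinalGroup d m ω) (Function.update ξ N (η N)) := by
      refine ih fun n hn => ?_
      obtain rfl | hlt := hn.eq_or_lt
      · simp
      · simp [Function.update_of_ne hlt.ne', h n hlt]
    rwa [MulAction.orbit_eq_iff.2 h₁] at h₂

end

theorem orbit_eq_cofinality_class_general (d m : ℕ) (hd : 2 ≤ d)
    (ω : ℕ → ((Fin m → ZMod d) →+ ZMod d))
    (hsurj : ∀ n, Function.Surjective (ω n)) (ξ : Bd d) :
    MulAction.orbit (spinalGroup d m ω) ξ = Cof ξ := by
  have : Fact (1 < d) := ⟨hd⟩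
  ext η
  constructor
  · rintro ⟨⟨g, hg⟩, rfl⟩
    exact cofinal_apply_of_mem_spinalGroup hg ξ
  · rintro ⟨N, hN⟩
    exact mem_orbit_of_forall_ge_eq hsurj N hN

/-- for every boundary point `ξ`, the orbit of `ξ` under the spinal group
`G_ω` is exactly the cofinality class of `ξ`. -/
theorem orbit_eq_cofinality_class (d m : ℕ) (hd : 2 ≤ d) (hm : 1 ≤ m)
    (ω : ℕ → ((Fin m → ZMod d) →+ ZMod d))
    (hsurj : ∀ n, Function.Surjective (ω n)) (ξ : Bd d) :
    MulAction.orbit (spinalGroup d m ω) ξ = Cof ξ :=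
  orbit_eq_cofinality_class_general d m hd ω hsurj ξ

end
end

section
/- Let d ≥ 2, m ≥ 1, ω ∈ Ω_{d,m}, and ξ ∈ X^ℕ. Define E_2 = {ξ ∈ X^ℕ : ξ_n ∈ {0, d−1} for all sufficiently large n} ∖ Cof((d−1)^ℕ) and E_1 = X^ℕ ∖ E_2. Then the simple Schreier graph Γ_ξ has exactly two ends (its space of ends has cardinality 2) if and only if ξ ∈ E_2, and exactly one end (its space of ends has cardinality 1) if and only if ξ ∈ E_1. -/
open MeasureTheory

noncomputable section

/-- Membership in `Ω_{d,m}`: all `ω_n` are surjective and `⋂_{j ≥ i} ker ω_j = {0}`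
for every `i ≥ 0`. -/
def InOmega (d m : ℕ) (ω : ℕ → ((Fin m → ZMod d) →+ ZMod d)) : Prop :=
  (∀ n, Function.Surjective (ω n)) ∧
  ∀ i : ℕ, ∀ b : Fin m → ZMod d, (∀ j, i ≤ j → ω j b = 0) → b = 0
/-- The set `E_2 = X^*{0, d-1}^ℕ ∖ Cof((d-1)^ℕ)`: points whose letters eventually all lie
in `{0, d-1}`, excluding the cofinality class of the constant word `d-1`. -/
def E2set (d : ℕ) : Set (Bd d) :=
  {ξ | ∃ N, ∀ n, N ≤ n → ξ n = 0 ∨ ξ n = (d : ZMod d) - 1} \ Cof (fun _ => (d : ZMod d) - 1)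

/-- The simple Schreier graph `Γ_ξ` on the cofinality class of `ξ`: distinct `u, v` are
adjacent iff `s · u = v` for some `s ∈ S`. -/
def schreierSimple (d m : ℕ) (ω : ℕ → ((Fin m → ZMod d) →+ ZMod d)) (ξ : Bd d) :
    SimpleGraph ↥(Cof ξ) :=
  SimpleGraph.fromRel (fun u v => ∃ f ∈ genSet d m ω, f (u : Bd d) = (v : Bd d))

/-!
A vertex of `Γ_ξ` lies outside the finite set `K_n` of words agreeing with `ξ` from position `n`
on exactly when its last difference `p` from `ξ` is at least `n`. Any two words with the same
`p ≥ n` are joined outside `K_n`: the generators act transitively on the first `p` letters, and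
the letter at `p` can be changed after the prefix `(d-1)^(p-1) 0`. A word with `p = k + 1 > n` is
joined in the same way to `(d-1)^k 0 ξ_{k+1} ξ_{k+2} …`, which has a smaller last difference and
stays outside `K_n` unless `ξ` reads `(d-1)^(k-n) 0` on `[n, k]`.

For `ξ ∈ E_1` there are arbitrarily large `n` (a letter `ξ_n ∉ {0, d-1}`, or `ξ` constant `d-1`
from `n` on) for which this never happens: everything outside `K_n` descends to last difference
`n`, so the complement of `K_n` is connected and `Γ_ξ` has one end. For `ξ ∈ E_2` and `n` large it
happens exactly for `k` the first zero of `ξ` after `n`, so there are at most two components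
outside `K_n`; they are separated by the parity of the number of zeros of `ξ` before the last
difference, which no move outside `K_n` changes.

A labelling of the vertices that classifies the components outside every `K_n` of an exhaustion
identifies the ends with the labels.
-/

open CategoryTheory Function Relation Filter

namespace SimpleGraph

variable {V α : Type*} {G : SimpleGraph V}

structure IsEndLabelling (G : SimpleGraph V) (F : ℕ → Finset V) (lab : V → α) : Prop where
  monotone : Monotone F
  exhaustive : ∀ K : Finset V, ∃ n, K ⊆ F n
  label_eq_of_adj : ∀ n u v, u ∉ F n → v ∉ F n → G.Adj u v → lab u = lab v
  reachable_of_label_eq : ∀ n u v (hu : u ∉ F n) (hv : v ∉ F n), lab u = lab v →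
    (G.induce (F n : Set V)ᶜ).Reachable ⟨u, hu⟩ ⟨v, hv⟩
  exists_label : ∀ n a, ∃ v ∉ F n, lab v = a

namespace IsEndLabelling

variable {F : ℕ → Finset V} {lab : V → α} (h : IsEndLabelling G F lab)

def labelCompl (n : ℕ) : G.ComponentCompl (F n) → α :=
  ComponentCompl.lift (fun v _ => lab v) fun _ _ hu hv => h.label_eq_of_adj n _ _ hu hv

lemma labelCompl_hom {n m : ℕ} (hnm : n ≤ m) (C : G.ComponentCompl (F m)) :
    h.labelCompl n (C.hom (by exact_mod_cast h.monotone hnm)) = h.labelCompl m C := by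
  induction C using ComponentCompl.ind
  rfl

lemma labelCompl_bijective (n : ℕ) : Bijective (h.labelCompl n) := by
  refine ⟨fun C D => ?_, fun a => ?_⟩
  · induction C using ComponentCompl.ind with | _ hu
    induction D using ComponentCompl.ind with | _ hv
    exact fun huv => ConnectedComponent.sound (h.reachable_of_label_eq n _ _ hu hv huv)
  · obtain ⟨v, hv, rfl⟩ := h.exists_label n a
    exact ⟨G.componentComplMk hv, rfl⟩

def endLabel (s : G.end) : α := h.labelCompl 0 (s.1 (Opposite.op (F 0)))

lemma labelCompl_end (s : G.end) (n : ℕ) :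
    h.labelCompl n (s.1 (Opposite.op (F n))) = h.endLabel s := by
  rw [endLabel, ← s.2 (opHomOfLE (h.monotone n.zero_le))]
  exact (h.labelCompl_hom n.zero_le _).symm

lemma endLabel_injective : Injective h.endLabel := by
  intro s t hst
  ext K : 2
  obtain ⟨n, hn⟩ := h.exhaustive K.unop
  have hst : s.1 (Opposite.op (F n)) = t.1 (Opposite.op (F n)) :=
    (h.labelCompl_bijective n).1 (by rw [labelCompl_end, labelCompl_end, hst])
  rw [← s.2 (opHomOfLE hn : Opposite.op (F n) ⟶ K), ← t.2 (opHomOfLE hn), hst]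

lemma endLabel_surjective : Surjective h.endLabel := by
  intro a
  let C (n : ℕ) : G.ComponentCompl (F n) := surjInv (h.labelCompl_bijective n).2 a
  have hC : ∀ n, h.labelCompl n (C n) = a := fun n => surjInv_eq _ a
  have hom_C : ∀ {n m} (hnm : n ≤ m), (C m).hom (by exact_mod_cast h.monotone hnm) = C n :=
    fun hnm => (h.labelCompl_bijective _).1 (by rw [labelCompl_hom _ hnm, hC, hC])
  let N (K : Finset V) : ℕ := (h.exhaustive K).choose
  have hN (K : Finset V) : (K : Set V) ⊆ F (N K) := by exact_mod_cast (h.exhaustive K).choose_spec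
  let s (K : (Finset V)ᵒᵖ) : G.ComponentCompl K.unop := (C (N K.unop)).hom (hN K.unop)
  have hs : ∀ K n (hK : (K.unop : Set V) ⊆ F n), s K = (C n).hom hK := by
    intro K n hK
    have h₁ := hom_C (le_max_left n (N K.unop))
    have h₂ := hom_C (le_max_right n (N K.unop))
    simp only [s, ← h₁, ← h₂, ← ComponentCompl.hom_trans]
  refine ⟨⟨s, fun {K L} f => ?_⟩, ?_⟩
  · change (s K).hom (by exact_mod_cast le_of_op_hom f) = s L
    rw [hs K (N K.unop) (hN _), ← ComponentCompl.hom_trans _ _ (by exact_mod_cast le_of_op_hom f),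
      hs L]
  · change h.labelCompl 0 (s _) = a
    rw [hs _ 0 subset_rfl, labelCompl_hom _ le_rfl, hC]

theorem card_end (h : IsEndLabelling G F lab) : Nat.card G.end = Nat.card α :=
  Nat.card_congr (Equiv.ofBijective _ ⟨h.endLabel_injective, h.endLabel_surjective⟩)

end IsEndLabelling

end SimpleGraph

namespace Spinal

open SimpleGraph

variable {d m : ℕ} {ξ x y : Bd d} {n p q k : ℕ}

def SpinePrefix (x : Bd d) (k : ℕ) : Prop := (∀ i < k, x i = -1) ∧ x k = 0

lemma SpinePrefix.unique [Fact (1 < d)] {l : ℕ} (hk : SpinePrefix x k)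
    (hl : SpinePrefix x l) : k = l := by
  have key : ∀ {k l}, SpinePrefix x k → SpinePrefix x l → ¬ k < l := fun hk hl hkl =>
    neg_ne_zero.2 (one_ne_zero (α := ZMod d)) ((hl.1 _ hkl).symm.trans hk.2)
  exact le_antisymm (not_lt.1 (key hl hk)) (not_lt.1 (key hk hl))

lemma SpinePrefix.congr (h : SpinePrefix x k) (hxy : ∀ i ≤ k, x i = y i) :
    SpinePrefix y k :=
  ⟨fun i hi => (hxy i hi.le).symm.trans (h.1 i hi), (hxy k le_rfl).symm.trans h.2⟩

/-- The moves of the generators `a^j` and `b_ω`: change the first letter, or the letter after a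
prefix `(d-1)^k 0`. -/
def Move (x y : Bd d) : Prop :=
  (∃ c, y = update x 0 c) ∨ ∃ k c, SpinePrefix x k ∧ y = update x (k + 1) c

lemma Move.symm : Move x y → Move y x := by
  rintro (⟨c, rfl⟩ | ⟨k, c, hk, rfl⟩)
  · exact Or.inl ⟨x 0, by simp⟩
  · exact Or.inr ⟨k, x (k + 1), hk.congr fun i hi => (update_of_ne (by omega) _ _).symm, by simp⟩

lemma Move.exists_eq_update (h : Move x y) : ∃ j c, y = update x j c := by
  rcases h with ⟨c, rfl⟩ | ⟨k, c, -, rfl⟩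
  exacts [⟨0, c, rfl⟩, ⟨k + 1, c, rfl⟩]

lemma aMap_iterate (j : ℕ) (x : Bd d) : (aMap d)^[j] x = update x 0 (x 0 + j) := by
  induction j with
  | zero => simp
  | succ j ih =>
    rw [iterate_succ_apply', ih]
    ext n
    rcases eq_or_ne n 0 with rfl | hn
    · simp [aMap, add_assoc]
    · simp [aMap, hn]

lemma bMap_eq_update [Fact (1 < d)] (ω : ℕ → ((Fin m → ZMod d) →+ ZMod d)) (b : Fin m → ZMod d)
    (hk : SpinePrefix x k) :
    bMap d m ω b x = update x (k + 1) (x (k + 1) + ω k b) := by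
  ext n
  rcases eq_or_ne n (k + 1) with rfl | hn
  · rw [update_self, bMap, if_pos ⟨k.succ_ne_zero, by simpa using hk.1, hk.2⟩]
    rfl
  · rw [update_of_ne hn, bMap, if_neg]
    rintro ⟨hn0, hpre, hzero⟩
    have := hk.unique ⟨by simpa using hpre, hzero⟩
    omega

lemma bMap_eq_self (ω : ℕ → ((Fin m → ZMod d) →+ ZMod d)) (b : Fin m → ZMod d)
    (hx : ∀ k, ¬ SpinePrefix x k) : bMap d m ω b x = x := by
  ext n
  rw [bMap, if_neg]
  rintro ⟨-, hpre, hzero⟩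
  exact hx (n - 1) ⟨by simpa using hpre, hzero⟩

lemma move_of_mem_genSet [Fact (1 < d)] {ω : ℕ → ((Fin m → ZMod d) →+ ZMod d)}
    {f : Bd d → Bd d} (hf : f ∈ genSet d m ω) (x : Bd d) : Move x (f x) := by
  rcases hf with ⟨j, -, -, rfl⟩ | ⟨b, -, rfl⟩
  · exact Or.inl ⟨_, aMap_iterate j x⟩
  · by_cases hx : ∃ k, SpinePrefix x k
    · obtain ⟨k, hk⟩ := hx
      exact Or.inr ⟨k, _, hk, bMap_eq_update ω b hk⟩
    · exact Or.inl ⟨x 0, by rw [bMap_eq_self ω b (not_exists.1 hx), update_eq_self]⟩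

lemma exists_mem_genSet_of_move [Fact (1 < d)] {ω : ℕ → ((Fin m → ZMod d) →+ ZMod d)}
    (hω : ∀ k, Surjective (ω k)) (h : Move x y) (hne : x ≠ y) :
    ∃ f ∈ genSet d m ω, f x = y := by
  rcases h with ⟨c, rfl⟩ | ⟨k, c, hk, rfl⟩
  · have hc : c - x 0 ≠ 0 := sub_ne_zero.2 fun h => hne (by rw [h, update_eq_self])
    refine ⟨(aMap d)^[(c - x 0).val], Or.inl ⟨_, ?_, ?_, rfl⟩, ?_⟩
    · exact Nat.one_le_iff_ne_zero.2 ((ZMod.val_ne_zero _).2 hc)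
    · exact Nat.le_sub_one_of_lt (ZMod.val_lt _)
    · simp [aMap_iterate]
  · obtain ⟨b, hb⟩ := hω k (c - x (k + 1))
    have hb0 : b ≠ 0 := by
      rintro rfl
      exact hne (by rw [map_zero, eq_comm, sub_eq_zero] at hb; rw [hb, update_eq_self])
    exact ⟨_, Or.inr ⟨b, hb0, rfl⟩, by simp [bMap_eq_update ω b hk, hb]⟩

lemma schreierSimple_adj_iff [Fact (1 < d)] {ω : ℕ → ((Fin m → ZMod d) →+ ZMod d)}
    (hω : ∀ k, Surjective (ω k)) {u v : Cof ξ} :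
    (schreierSimple d m ω ξ).Adj u v ↔ (u : Bd d) ≠ v ∧ Move (u : Bd d) v := by
  rw [schreierSimple, SimpleGraph.fromRel_adj, Ne, Subtype.ext_iff]
  refine and_congr_right fun hne => ⟨?_, fun h => Or.inl (exists_mem_genSet_of_move hω h hne)⟩
  rintro (⟨f, hf, hfu⟩ | ⟨f, hf, hfv⟩)
  · exact hfu ▸ move_of_mem_genSet hf _
  · exact (hfv ▸ move_of_mem_genSet hf _).symm

variable (ξ) in
/-- As a vertex of `Γ_ξ`, such an `x` lies outside the finite set of words agreeing with `ξ` from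
position `n` on. -/
def FarFrom (n : ℕ) (x : Bd d) : Prop := ∃ i, n ≤ i ∧ x i ≠ ξ i

variable (ξ) in
def FarMove (n : ℕ) (x y : Bd d) : Prop := Move x y ∧ FarFrom ξ n x ∧ FarFrom ξ n y

variable (ξ) in
abbrev Joined (n : ℕ) : Bd d → Bd d → Prop := ReflTransGen (FarMove ξ n)

variable (ξ) in
def IsLastDiff (x : Bd d) (p : ℕ) : Prop := x p ≠ ξ p ∧ ∀ i, p < i → x i = ξ i

variable (ξ) in
def lastDiff (x : Bd d) : ℕ := sSup {i | x i ≠ ξ i}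

def spineWord (x : Bd d) (k : ℕ) : Bd d := fun i => if i < k then -1 else if i = k then 0 else x i

lemma FarMove.symm (h : FarMove ξ n x y) : FarMove ξ n y x := ⟨h.1.symm, h.2.2, h.2.1⟩

lemma Joined.symm (h : Joined ξ n x y) : Joined ξ n y x :=
  ReflTransGen.mono (fun _ _ => FarMove.symm) _ _ (reflTransGen_swap.2 h)

lemma Move.mem_cof (h : Move x y) (hx : x ∈ Cof ξ) : y ∈ Cof ξ := by
  obtain ⟨j, c, rfl⟩ := h.exists_eq_update
  obtain ⟨N, hN⟩ := hx
  exact ⟨max N (j + 1), fun i hi => (hN i (by omega)).trans (update_of_ne (by omega) _ _).symm⟩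

lemma IsLastDiff.farFrom (h : IsLastDiff ξ x p) (hp : n ≤ p) : FarFrom ξ n x := ⟨p, hp, h.1⟩

lemma IsLastDiff.unique (hp : IsLastDiff ξ x p) (hq : IsLastDiff ξ x q) : p = q := by
  by_contra hne
  rcases Nat.lt_or_gt_of_ne hne with h | h
  exacts [hq.1 (hp.2 q h), hp.1 (hq.2 p h)]

lemma IsLastDiff.mem_cof (h : IsLastDiff ξ x p) : x ∈ Cof ξ :=
  ⟨p + 1, fun i hi => (h.2 i (by omega)).symm⟩

lemma isLastDiff_lastDiff (hx : x ∈ Cof ξ) (hfar : FarFrom ξ n x) :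
    n ≤ lastDiff ξ x ∧ IsLastDiff ξ x (lastDiff ξ x) := by
  obtain ⟨i, hi, hne⟩ := hfar
  obtain ⟨N, hN⟩ := hx
  have hbdd : BddAbove {i | x i ≠ ξ i} :=
    ⟨N, fun j hj => not_lt.1 fun hNj => hj (hN j hNj.le).symm⟩
  refine ⟨hi.trans (le_csSup hbdd hne), Nat.sSup_mem ⟨i, hne⟩ hbdd, fun j hj => ?_⟩
  by_contra hne'
  exact (le_csSup hbdd hne').not_gt hj

lemma IsLastDiff.lastDiff_eq (h : IsLastDiff ξ x p) : lastDiff ξ x = p :=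
  (isLastDiff_lastDiff h.mem_cof (h.farFrom le_rfl)).2.unique h

lemma spinePrefix_spineWord (x : Bd d) (k : ℕ) : SpinePrefix (spineWord x k) k :=
  ⟨fun i hi => if_pos hi, by simp [spineWord]⟩

lemma spineWord_of_lt (x : Bd d) (h : k < i) : spineWord x k i = x i := by
  simp [spineWord, h.not_gt, h.ne']

lemma spineWord_eq_update (h : ∀ i, k + 1 < i → x i = y i) :
    spineWord y k = update (spineWord x k) (k + 1) (y (k + 1)) := by
  ext j
  simp only [spineWord, update_apply]
  split_ifs <;> first | rfl | omega | (subst_vars; rfl) | exact (h j (by omega)).symm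

lemma joined_update_zero {c : ZMod d} (hx : FarFrom ξ n x) (hy : FarFrom ξ n (update x 0 c)) :
    Joined ξ n x (update x 0 c) :=
  .single ⟨Or.inl ⟨c, rfl⟩, hx, hy⟩

lemma joined_update_succ {c : ZMod d} (hk : SpinePrefix x k) (hx : FarFrom ξ n x)
    (hy : FarFrom ξ n (update x (k + 1) c)) : Joined ξ n x (update x (k + 1) c) :=
  .single ⟨Or.inr ⟨k, c, hk, rfl⟩, hx, hy⟩

/-- The generators act transitively on the first `p` letters. -/
lemma joined_of_eq_above (hxy : ∀ i, p ≤ i → x i = y i)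
    (hfar : ∃ i, p ≤ i ∧ n ≤ i ∧ x i ≠ ξ i) : Joined ξ n x y := by
  induction p generalizing x y with
  | zero => exact (funext fun i => hxy i i.zero_le : x = y) ▸ .refl
  | succ p ih =>
    obtain ⟨i, hpi, hni, hxi⟩ := hfar
    have farx : FarFrom ξ n x := ⟨i, hni, hxi⟩
    rcases p with _ | k
    · have hy : y = update x 0 (y 0) := eq_update_iff.2 ⟨rfl, fun j hj => (hxy j (by omega)).symm⟩
      rw [hy]
      exact joined_update_zero farx ⟨i, hni, by rwa [update_of_ne (by omega)]⟩
    · have hxs : Joined ξ n x (spineWord x k) :=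
        ih (fun j hj => (spineWord_of_lt x (by omega)).symm) ⟨i, by omega, hni, hxi⟩
      have hs : ∀ j, k + 1 < j → update (spineWord x k) (k + 1) (y (k + 1)) j = x j :=
        fun j hj => by rw [update_of_ne (by omega), spineWord_of_lt x (by omega)]
      have hst : Joined ξ n (spineWord x k) (update (spineWord x k) (k + 1) (y (k + 1))) :=
        joined_update_succ (spinePrefix_spineWord x k)
          ⟨i, hni, by rwa [spineWord_of_lt x (by omega)]⟩ ⟨i, hni, by rwa [hs i (by omega)]⟩
      refine hxs.trans (hst.trans (ih (fun j hj => ?_) ⟨i, by omega, hni, ?_⟩))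
      · rcases eq_or_lt_of_le hj with rfl | hj
        · simp
        · exact (hs j hj).trans (hxy j hj)
      · rwa [hs i (by omega)]

lemma joined_of_isLastDiff (hp : n ≤ p) (hx : IsLastDiff ξ x p) (hy : IsLastDiff ξ y p) :
    Joined ξ n x y := by
  have hxy : ∀ i, p < i → y i = x i := fun i hi => (hy.2 i hi).trans (hx.2 i hi).symm
  rcases p with _ | k
  · have hy' : y = update x 0 (y 0) := eq_update_iff.2 ⟨rfl, fun j hj => hxy j (by omega)⟩
    exact hy' ▸ joined_update_zero (hx.farFrom hp) (hy' ▸ hy.farFrom hp)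
  · have hnorm : ∀ {z}, IsLastDiff ξ z (k + 1) → Joined ξ n z (spineWord z k) := fun hz =>
      joined_of_eq_above (fun j hj => (spineWord_of_lt _ (by omega)).symm) ⟨k + 1, le_rfl, hp, hz.1⟩
    have hxy' := spineWord_eq_update (k := k) fun i hi => (hxy i hi).symm
    refine (hnorm hx).trans (.trans ?_ (hnorm hy).symm)
    rw [hxy']
    refine joined_update_succ (spinePrefix_spineWord x k) ⟨k + 1, hp, ?_⟩ ⟨k + 1, hp, ?_⟩
    · rw [spineWord_of_lt x (by omega)]; exact hx.1
    · rw [← hxy', spineWord_of_lt y (by omega)]; exact hy.1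

lemma spineWord_mem_cof (ξ : Bd d) (k : ℕ) : spineWord ξ k ∈ Cof ξ :=
  ⟨k + 1, fun _ hi => (spineWord_of_lt ξ (by omega)).symm⟩

lemma joined_spineWord (hp : n ≤ k + 1) (hx : IsLastDiff ξ x (k + 1))
    (hfar : FarFrom ξ n (spineWord ξ k)) : Joined ξ n x (spineWord ξ k) := by
  have hfar' : FarFrom ξ n (spineWord x k) :=
    ⟨k + 1, hp, by rw [spineWord_of_lt x (by omega)]; exact hx.1⟩
  refine (joined_of_eq_above (p := k + 1) (y := spineWord x k)
    (fun j hj => (spineWord_of_lt x (by omega)).symm) ⟨k + 1, le_rfl, hp, hx.1⟩).trans ?_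
  rw [spineWord_eq_update (x := x) fun i hi => hx.2 i hi] at hfar ⊢
  exact joined_update_succ (spinePrefix_spineWord x k) hfar' hfar

lemma exists_joined_isLastDiff (hp : n ≤ p) (hx : IsLastDiff ξ x p) :
    ∃ y q, Joined ξ n x y ∧ n ≤ q ∧ IsLastDiff ξ y q ∧
      (q = n ∨ ∃ k, n ≤ k ∧ q = k + 1 ∧ ¬ FarFrom ξ n (spineWord ξ k)) := by
  induction p using Nat.strong_induction_on generalizing x with | _ p ih =>
  rcases eq_or_lt_of_le hp with rfl | hlt
  · exact ⟨x, n, .refl, le_rfl, hx, Or.inl rfl⟩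
  obtain ⟨k, rfl⟩ : ∃ k, p = k + 1 := ⟨p - 1, by omega⟩
  by_cases hfar : FarFrom ξ n (spineWord ξ k)
  · obtain ⟨hn, hs⟩ := isLastDiff_lastDiff (spineWord_mem_cof ξ k) hfar
    have hlt : lastDiff ξ (spineWord ξ k) < k + 1 :=
      not_le.1 fun hle => hs.1 (spineWord_of_lt ξ (by omega))
    obtain ⟨y, q, hsy, rest⟩ := ih _ hlt hn hs
    exact ⟨y, q, (joined_spineWord hp hx hfar).trans hsy, rest⟩
  · exact ⟨x, k + 1, .refl, hp, hx, Or.inr ⟨k, by omega, rfl, hfar⟩⟩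

variable (ξ) in
def bump (p : ℕ) : Bd d := update ξ p (ξ p + 1)

lemma isLastDiff_bump [Fact (1 < d)] (ξ : Bd d) (p : ℕ) : IsLastDiff ξ (bump ξ p) p :=
  ⟨by simp [bump], fun _ hi => update_of_ne hi.ne' _ _⟩

lemma joined_bump_of_forall_farFrom [Fact (1 < d)]
    (hsp : ∀ k, n ≤ k → FarFrom ξ n (spineWord ξ k)) (hx : x ∈ Cof ξ) (hfar : FarFrom ξ n x) :
    Joined ξ n x (bump ξ n) := by
  obtain ⟨hp, hx⟩ := isLastDiff_lastDiff hx hfar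
  obtain ⟨y, q, hxy, -, hy, rfl | ⟨k, hk, -, hk'⟩⟩ := exists_joined_isLastDiff hp hx
  · exact hxy.trans (joined_of_isLastDiff le_rfl hy (isLastDiff_bump ξ q))
  · exact absurd (hsp k hk) hk'

lemma farFrom_spineWord_of_ne [Fact (1 < d)] (h0 : ξ n ≠ 0) (h1 : ξ n ≠ -1) (hk : n ≤ k) :
    FarFrom ξ n (spineWord ξ k) := by
  refine ⟨n, le_rfl, ?_⟩
  rcases eq_or_lt_of_le hk with rfl | hk
  · simpa [spineWord] using h0.symm
  · simpa [spineWord, hk] using h1.symm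

lemma farFrom_spineWord_of_eq_neg_one [Fact (1 < d)] (h : ξ k = -1) (hk : n ≤ k) :
    FarFrom ξ n (spineWord ξ k) :=
  ⟨k, hk, by simp [spineWord, h]⟩

lemma Move.exists_spinePrefix_of_lt (h : Move x y) (hx : IsLastDiff ξ x p)
    (hy : IsLastDiff ξ y q) (hpq : p < q) : ∃ k, q = k + 1 ∧ SpinePrefix x k := by
  rcases h with ⟨c, rfl⟩ | ⟨k, c, hk, rfl⟩
  · exact absurd (hx.2 q hpq) (by simpa [update_of_ne (by omega : q ≠ 0)] using hy.1)
  · refine ⟨k, by_contra fun hq => hy.1 ?_, hk⟩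
    rw [update_of_ne hq]
    exact hx.2 q hpq

lemma count_eq_of_forall_ne {a b : ℕ} (hab : a ≤ b) (h : ∀ i, a ≤ i → i < b → ξ i ≠ 0) :
    Nat.count (ξ · = 0) b = Nat.count (ξ · = 0) a := by
  induction b, hab using Nat.le_induction with
  | base => rfl
  | succ b hab ih =>
    rw [Nat.count_succ, if_neg (h b hab (by omega)), add_zero]
    exact ih fun i hi hib => h i hi (by omega)

/-- Across a move that raises the last difference from `p` to `k + 1`, the number of zeros of
`ξ` below the last difference changes by `0` (if `p = k`) or by `2` (the zeros at `p` and `k`). -/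
lemma count_succ_eq_of_spinePrefix [Fact (1 < d)] (hC : ∀ i, n ≤ i → ξ i = 0 ∨ ξ i = -1)
    (hp : n ≤ p) (hx : IsLastDiff ξ x p) (hk : SpinePrefix x k) (hpk : p ≤ k) :
    (Nat.count (ξ · = 0) (k + 1) : ZMod 2) = Nat.count (ξ · = 0) p := by
  rw [ZMod.natCast_eq_natCast_iff']
  rcases eq_or_lt_of_le hpk with rfl | hpk
  · rw [Nat.count_succ, if_neg fun h => hx.1 (hk.2.trans h.symm), add_zero]
  · have hξp : ξ p = 0 := (hC p hp).resolve_right fun h => hx.1 ((hk.1 p hpk).trans h.symm)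
    have hξk : ξ k = 0 := (hx.2 k hpk).symm.trans hk.2
    have hmid : Nat.count (ξ · = 0) k = Nat.count (ξ · = 0) (p + 1) :=
      count_eq_of_forall_ne hpk fun i hi hik => by
        rw [← hx.2 i (by omega), hk.1 i hik]; exact neg_ne_zero.2 one_ne_zero
    rw [Nat.count_succ, if_pos hξk, hmid, Nat.count_succ, if_pos hξp]
    omega

variable (ξ) in
def zeroParity (x : Bd d) : ZMod 2 := Nat.count (ξ · = 0) (lastDiff ξ x)

lemma zeroParity_eq_of_farMove [Fact (1 < d)] (hC : ∀ i, n ≤ i → ξ i = 0 ∨ ξ i = -1)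
    (hx : x ∈ Cof ξ) (h : FarMove ξ n x y) : zeroParity ξ x = zeroParity ξ y := by
  obtain ⟨hp, hx⟩ := isLastDiff_lastDiff hx h.2.1
  obtain ⟨hq, hy⟩ := isLastDiff_lastDiff (h.1.mem_cof hx.mem_cof) h.2.2
  rcases lt_trichotomy (lastDiff ξ x) (lastDiff ξ y) with hxy | hxy | hxy
  · obtain ⟨k, hk, hpre⟩ := h.1.exists_spinePrefix_of_lt hx hy hxy
    rw [zeroParity, zeroParity, hk, count_succ_eq_of_spinePrefix hC hp hx hpre (by omega)]
  · rw [zeroParity, zeroParity, hxy]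
  · obtain ⟨k, hk, hpre⟩ := h.1.symm.exists_spinePrefix_of_lt hy hx hxy
    rw [zeroParity, zeroParity, hk, count_succ_eq_of_spinePrefix hC hq hy hpre (by omega)]

lemma Joined.mem_cof (h : Joined ξ n x y) (hx : x ∈ Cof ξ) : y ∈ Cof ξ := by
  induction h with
  | refl => exact hx
  | tail _ hyz ih => exact hyz.1.mem_cof ih

lemma zeroParity_eq_of_joined [Fact (1 < d)] (hC : ∀ i, n ≤ i → ξ i = 0 ∨ ξ i = -1)
    (hx : x ∈ Cof ξ) (h : Joined ξ n x y) : zeroParity ξ x = zeroParity ξ y := by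
  induction h with
  | refl => rfl
  | tail hxy hyz ih =>
    exact ih.trans (zeroParity_eq_of_farMove hC (Joined.mem_cof hxy hx) hyz)

section FirstZero

variable [Fact (1 < d)] (hnq : n ≤ q) (hq : ξ q = 0) (hneg : ∀ i, n ≤ i → i < q → ξ i = -1)
include hnq hq hneg

lemma eq_of_not_farFrom_spineWord (hk : n ≤ k) (h : ¬ FarFrom ξ n (spineWord ξ k)) : k = q := by
  have h' : ∀ i, n ≤ i → spineWord ξ k i = ξ i := by simpa [FarFrom] using h
  have hne : (-1 : ZMod d) ≠ 0 := neg_ne_zero.2 one_ne_zero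
  rcases lt_trichotomy k q with hkq | hkq | hkq
  · exact absurd ((h' k hk).symm.trans (spinePrefix_spineWord ξ k).2) (hneg k hk hkq ▸ hne)
  · exact hkq
  · exact absurd ((h' q hnq).symm.trans ((spinePrefix_spineWord ξ k).1 q hkq)) (hq ▸ hne.symm)

lemma count_firstZero_succ :
    (Nat.count (ξ · = 0) (q + 1) : ZMod 2) ≠ Nat.count (ξ · = 0) n := by
  have hne : ∀ i, n ≤ i → i < q → ξ i ≠ 0 := fun i hi hiq => by
    rw [hneg i hi hiq]
    exact neg_ne_zero.2 one_ne_zero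
  rw [Ne, ZMod.natCast_eq_natCast_iff', Nat.count_succ, if_pos hq, count_eq_of_forall_ne hnq hne]
  omega

lemma exists_joined_isLastDiff_firstZero (hx : x ∈ Cof ξ) (hfar : FarFrom ξ n x) :
    ∃ y r, Joined ξ n x y ∧ n ≤ r ∧ IsLastDiff ξ y r ∧ (r = n ∨ r = q + 1) := by
  obtain ⟨hp, hx⟩ := isLastDiff_lastDiff hx hfar
  obtain ⟨y, r, hxy, hr, hy, rfl | ⟨k, hk, rfl, hk'⟩⟩ := exists_joined_isLastDiff hp hx
  · exact ⟨y, r, hxy, hr, hy, Or.inl rfl⟩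
  · exact ⟨y, k + 1, hxy, hr, hy, Or.inr (by rw [eq_of_not_farFrom_spineWord hnq hq hneg hk hk'])⟩

lemma joined_of_zeroParity_eq (hC : ∀ i, n ≤ i → ξ i = 0 ∨ ξ i = -1) (hx : x ∈ Cof ξ)
    (hy : y ∈ Cof ξ) (hxf : FarFrom ξ n x) (hyf : FarFrom ξ n y)
    (hxy : zeroParity ξ x = zeroParity ξ y) : Joined ξ n x y := by
  obtain ⟨x', r, hxx', hr, hx', hr'⟩ := exists_joined_isLastDiff_firstZero hnq hq hneg hx hxf
  obtain ⟨y', s, hyy', -, hy', hs'⟩ := exists_joined_isLastDiff_firstZero hnq hq hneg hy hyf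
  have hpar : (Nat.count (ξ · = 0) r : ZMod 2) = Nat.count (ξ · = 0) s := by
    rw [← hx'.lastDiff_eq, ← hy'.lastDiff_eq]
    exact (zeroParity_eq_of_joined hC hx hxx').symm.trans
      (hxy.trans (zeroParity_eq_of_joined hC hy hyy'))
  have hcount := count_firstZero_succ hnq hq hneg
  obtain rfl : r = s := by
    rcases hr' with rfl | rfl <;> rcases hs' with rfl | rfl
    exacts [rfl, absurd hpar.symm hcount, absurd hpar hcount, rfl]
  exact hxx'.trans ((joined_of_isLastDiff hr hx' hy').trans hyy'.symm)

end FirstZero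

lemma finite_not_farFrom [NeZero d] (ξ : Bd d) (n : ℕ) :
    {v : Cof ξ | ¬ FarFrom ξ n v}.Finite := by
  refine Set.finite_coe_iff.1 (Finite.of_injective (fun v (i : Fin n) => (v.1 : Bd d) i)
    fun a b hab => Subtype.ext (Subtype.ext (funext fun i => ?_)))
  have ha := a.2
  have hb := b.2
  simp only [Set.mem_ofPred_eq, FarFrom, not_exists, not_and, not_not] at ha hb
  by_cases hi : i < n
  · exact congrFun hab ⟨i, hi⟩
  · exact (ha i (not_lt.1 hi)).trans (hb i (not_lt.1 hi)).symm

variable (ξ) in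
def nearSet [NeZero d] (n : ℕ) : Finset (Cof ξ) := (finite_not_farFrom ξ n).toFinset

lemma notMem_nearSet [NeZero d] {v : Cof ξ} : v ∉ nearSet ξ n ↔ FarFrom ξ n v := by
  simp [nearSet]

lemma nearSet_mono [NeZero d] {n n' : ℕ} (h : n ≤ n') : nearSet ξ n ⊆ nearSet ξ n' := by
  intro v
  contrapose
  simp only [notMem_nearSet]
  exact fun ⟨i, hi, hne⟩ => ⟨i, h.trans hi, hne⟩

lemma reachable_of_joined [Fact (1 < d)] {ω : ℕ → ((Fin m → ZMod d) →+ ZMod d)}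
    (hω : ∀ k, Surjective (ω k)) {u v : Cof ξ} (hu : u ∉ nearSet ξ n) (hv : v ∉ nearSet ξ n)
    (h : Joined ξ n u v) :
    ((schreierSimple d m ω ξ).induce (nearSet ξ n : Set (Cof ξ))ᶜ).Reachable ⟨u, hu⟩ ⟨v, hv⟩ := by
  obtain ⟨v, hvξ⟩ := v
  change Joined ξ n u v at h
  induction h with
  | refl => rfl
  | @tail b c _ hbc ih =>
    have hb : b ∈ Cof ξ := hbc.1.symm.mem_cof hvξ
    refine (ih hb (notMem_nearSet.2 hbc.2.1)).trans ?_
    by_cases hbc' : b = c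
    · subst hbc'
      rfl
    · exact Adj.reachable (induce_adj.2 ((schreierSimple_adj_iff hω).2 ⟨hbc', hbc.1⟩))

theorem card_end_schreierSimple [Fact (1 < d)] {ω : ℕ → ((Fin m → ZMod d) →+ ZMod d)}
    (hω : ∀ k, Surjective (ω k)) {α : Type*} (lab : Bd d → α) {P : ℕ → Prop}
    (hP : ∃ᶠ n in atTop, P n)
    (hmove : ∀ n, P n → ∀ x y, x ∈ Cof ξ → FarMove ξ n x y → lab x = lab y)
    (hjoined : ∀ n, P n → ∀ x y, x ∈ Cof ξ → y ∈ Cof ξ → FarFrom ξ n x → FarFrom ξ n y →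
      lab x = lab y → Joined ξ n x y)
    (hexists : ∀ n, P n → ∀ a, ∃ x ∈ Cof ξ, FarFrom ξ n x ∧ lab x = a) :
    Nat.card (schreierSimple d m ω ξ).end = Nat.card α := by
  have hinf := Nat.frequently_atTop_iff_infinite.1 hP
  have hmono := Nat.nth_strictMono hinf
  have hPn := Nat.nth_mem_of_infinite hinf
  refine IsEndLabelling.card_end (F := fun j => nearSet ξ (Nat.nth P j)) (lab := fun v => lab v)
    ⟨fun a b hab => nearSet_mono (hmono.monotone hab), fun K => ?_, fun j u v hu hv huv => ?_,
      fun j u v hu hv huv => ?_, fun j a => ?_⟩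
  · choose N hN using fun v : Cof ξ => v.2
    refine ⟨K.sup N, fun v hv => ?_⟩
    by_contra hvK
    obtain ⟨i, hi, hne⟩ := notMem_nearSet.1 hvK
    exact hne (hN v i ((K.le_sup hv).trans (hmono.le_apply.trans hi))).symm
  · exact hmove _ (hPn j) u v u.2
      ⟨((schreierSimple_adj_iff hω).1 huv).2, notMem_nearSet.1 hu, notMem_nearSet.1 hv⟩
  · exact reachable_of_joined hω hu hv
      (hjoined _ (hPn j) u v u.2 v.2 (notMem_nearSet.1 hu) (notMem_nearSet.1 hv) huv)
  · obtain ⟨x, hx, hfar, rfl⟩ := hexists _ (hPn j) a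
    exact ⟨⟨x, hx⟩, notMem_nearSet.2 hfar, rfl⟩

theorem card_end_eq_one [Fact (1 < d)] {ω : ℕ → ((Fin m → ZMod d) →+ ZMod d)}
    (hω : ∀ k, Surjective (ω k)) (h : ∃ᶠ n in atTop, ∀ k, n ≤ k → FarFrom ξ n (spineWord ξ k)) :
    Nat.card (schreierSimple d m ω ξ).end = 1 := by
  rw [card_end_schreierSimple hω (fun _ => ()) h (fun _ _ _ _ _ _ => rfl)
    (fun _ hn _ _ hx hy hxf hyf _ => (joined_bump_of_forall_farFrom hn hx hxf).trans
      (joined_bump_of_forall_farFrom hn hy hyf).symm)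
    (fun n _ _ => ⟨bump ξ n, (isLastDiff_bump ξ n).mem_cof, (isLastDiff_bump ξ n).farFrom le_rfl,
      rfl⟩), Nat.card_unique]

lemma exists_firstZero (hz : ∃ᶠ n in atTop, ξ n = 0) (hC : ∀ i, n ≤ i → ξ i = 0 ∨ ξ i = -1) :
    ∃ q, n ≤ q ∧ ξ q = 0 ∧ ∀ i, n ≤ i → i < q → ξ i = -1 := by
  classical
  have hex : ∃ q, n ≤ q ∧ ξ q = 0 := frequently_atTop.1 hz n
  exact ⟨Nat.find hex, (Nat.find_spec hex).1, (Nat.find_spec hex).2,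
    fun i hi hiq => (hC i hi).resolve_left fun h0 => Nat.find_min hex hiq ⟨hi, h0⟩⟩

theorem card_end_eq_two [Fact (1 < d)] {ω : ℕ → ((Fin m → ZMod d) →+ ZMod d)}
    (hω : ∀ k, Surjective (ω k)) (hC : ∀ᶠ n in atTop, ξ n = 0 ∨ ξ n = -1)
    (hz : ∃ᶠ n in atTop, ξ n = 0) : Nat.card (schreierSimple d m ω ξ).end = 2 := by
  obtain ⟨N, hN⟩ := eventually_atTop.1 hC
  have hP : ∃ᶠ n in atTop, ∀ i, n ≤ i → ξ i = 0 ∨ ξ i = -1 :=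
    (eventually_atTop.2 ⟨N, fun n hn i hi => hN i (hn.trans hi)⟩).frequently
  rw [card_end_schreierSimple hω (zeroParity ξ) hP
    (fun _ hn _ _ hx h => zeroParity_eq_of_farMove hn hx h)
    (fun n hn x y hx hy hxf hyf hxy => ?_) (fun n hn a => ?_), Nat.card_zmod]
  · obtain ⟨q, hnq, hq, hneg⟩ := exists_firstZero hz hn
    exact joined_of_zeroParity_eq hnq hq hneg hn hx hy hxf hyf hxy
  · obtain ⟨q, hnq, hq, hneg⟩ := exists_firstZero hz hn
    have h₀ := isLastDiff_bump ξ n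
    have h₁ := isLastDiff_bump ξ (q + 1)
    have hZMod2 : ∀ a b c : ZMod 2, b ≠ c → a = b ∨ a = c := by decide
    rcases hZMod2 a _ _ (count_firstZero_succ hnq hq hneg) with rfl | rfl
    · exact ⟨_, h₁.mem_cof, h₁.farFrom (by omega), by rw [zeroParity, h₁.lastDiff_eq]⟩
    · exact ⟨_, h₀.mem_cof, h₀.farFrom le_rfl, by rw [zeroParity, h₀.lastDiff_eq]⟩

lemma mem_E2set_iff :
    ξ ∈ E2set d ↔ (∀ᶠ n in atTop, ξ n = 0 ∨ ξ n = -1) ∧ ¬ ∀ᶠ n in atTop, ξ n = -1 := by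
  simp [E2set, Cof, Cofinal, eventually_atTop, eq_comm]

theorem card_end_eq_two_of_mem_E2set [Fact (1 < d)] {ω : ℕ → ((Fin m → ZMod d) →+ ZMod d)}
    (hω : ∀ k, Surjective (ω k)) (hE2 : ξ ∈ E2set d) :
    Nat.card (schreierSimple d m ω ξ).end = 2 := by
  obtain ⟨hC, hneg⟩ := mem_E2set_iff.1 hE2
  exact card_end_eq_two hω hC
    (((not_eventually.1 hneg).and_eventually hC).mono fun _ h => h.2.resolve_right h.1)

theorem card_end_eq_one_of_not_mem_E2set [Fact (1 < d)] {ω : ℕ → ((Fin m → ZMod d) →+ ZMod d)}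
    (hω : ∀ k, Surjective (ω k)) (hE2 : ξ ∉ E2set d) :
    Nat.card (schreierSimple d m ω ξ).end = 1 := by
  refine card_end_eq_one hω ?_
  by_cases hC : ∀ᶠ n in atTop, ξ n = 0 ∨ ξ n = -1
  · obtain ⟨M, hM⟩ := eventually_atTop.1 (not_not.1 fun h => hE2 (mem_E2set_iff.2 ⟨hC, h⟩))
    exact frequently_atTop.2 fun a => ⟨max a M, le_max_left a M, fun k hk =>
      farFrom_spineWord_of_eq_neg_one (hM k (le_of_max_le_right hk)) hk⟩
  · exact (not_eventually.1 hC).mono fun n hn k hk =>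
      farFrom_spineWord_of_ne (not_or.1 hn).1 (not_or.1 hn).2 hk

end Spinal

theorem number_of_ends_general (d m : ℕ) (hd : 2 ≤ d)
    (ω : ℕ → ((Fin m → ZMod d) →+ ZMod d)) (hω : InOmega d m ω) (ξ : Bd d) :
    (Nat.card ↥(SimpleGraph.end (schreierSimple d m ω ξ)) = 2 ↔ ξ ∈ E2set d) ∧
    (Nat.card ↥(SimpleGraph.end (schreierSimple d m ω ξ)) = 1 ↔ ξ ∉ E2set d) := by
  have : Fact (1 < d) := ⟨hd⟩
  by_cases hE2 : ξ ∈ E2set d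
  · simp [Spinal.card_end_eq_two_of_mem_E2set hω.1 hE2, hE2]
  · simp [Spinal.card_end_eq_one_of_not_mem_E2set hω.1 hE2, hE2]

/-- `Γ_ξ` has exactly two ends iff `ξ ∈ E_2`, and exactly one end iff
`ξ ∈ E_1 = X^ℕ ∖ E_2`. -/
theorem number_of_ends (d m : ℕ) (hd : 2 ≤ d) (hm : 1 ≤ m)
    (ω : ℕ → ((Fin m → ZMod d) →+ ZMod d)) (hω : InOmega d m ω) (ξ : Bd d) :
    (Nat.card ↥(SimpleGraph.end (schreierSimple d m ω ξ)) = 2 ↔ ξ ∈ E2set d) ∧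
    (Nat.card ↥(SimpleGraph.end (schreierSimple d m ω ξ)) = 1 ↔ ξ ∉ E2set d) :=
  number_of_ends_general d m hd ω hω ξ
end
end

section
/- Let d = 2, m ≥ 2, ω ∈ Ω_{2,m}, and let ξ, η ∈ X^ℕ with ξ ≠ η. Then (Γ_ξ, ξ) and (Γ_η, η) are isomorphic as rooted, undirected, unlabeled graphs if and only if neither ξ nor η is cofinal with the constant word 1^ℕ. -/
open MeasureTheory

noncomputable section

/-- Edge multiplicity in the Schreier graph `Γ_ξ`:
`mult(u, v) = card {s ∈ S : s · u = v}`. -/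
def mult (d m : ℕ) (ω : ℕ → ((Fin m → ZMod d) →+ ZMod d)) (u v : Bd d) : ℕ :=
  Nat.card {f : Bd d → Bd d // f ∈ genSet d m ω ∧ f u = v}
/-- `φ` is an isomorphism of rooted, undirected, unlabeled graphs `(Γ_ξ, ξ) → (Γ_η, η)`:
a bijection `Cof(ξ) → Cof(η)` sending `ξ` to `η` and preserving edge multiplicities. -/
def IsRootedIso (d m : ℕ) (ω : ℕ → ((Fin m → ZMod d) →+ ZMod d)) (ξ η : Bd d)
    (φ : ↥(Cof ξ) ≃ ↥(Cof η)) : Prop :=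
  φ ⟨ξ, self_mem_Cof ξ⟩ = ⟨η, self_mem_Cof η⟩ ∧
  ∀ u v : ↥(Cof ξ), mult d m ω ↑u ↑v = mult d m ω ↑(φ u) ↑(φ v)

/-!
For `d = 2` the generator `a` flips the first letter, and each `b_ω` either fixes a word or
flips the letter right after its first `0`; so all the `b_ω` move a word `ζ ≠ 1^ℕ` either
nowhere or to one common neighbour `bStep ζ`, and `1^ℕ` is the only word they all fix.
Alternating `a` and `bStep` from `ρ` gives a walk `ℤ → Cof ρ` (a Gray code) that is onto.
A repetition at even distance would make it periodic, contradicting that `Cof ρ` is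
infinite; one at odd distance would, by reflection, produce a fixed point of `bStep`, that is
`1^ℕ`. Hence if `ρ` is not cofinal with `1^ℕ`, `Γ_ρ` is the line `ℤ` with edge weights
alternating between `1` and `2^(m-1)` and `2^(m-1) - 1` loops everywhere, and any two such
graphs are isomorphic through their walks. The class of `1^ℕ` instead is a ray whose end
`1^ℕ` is the only vertex with `2^m - 1` loops, so every multiplicity-preserving bijection
fixes it pointwise, and a rooted isomorphism forces `ξ = η`.
-/

theorem Cofinal.refl {d : ℕ} (ξ : Bd d) : Cofinal ξ ξ := ⟨0, fun _ _ => rfl⟩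

theorem Cofinal.symm {d : ℕ} {ξ η : Bd d} (h : Cofinal ξ η) : Cofinal η ξ :=
  let ⟨N, hN⟩ := h
  ⟨N, fun n hn => (hN n hn).symm⟩

theorem Cofinal.trans {d : ℕ} {ξ η θ : Bd d} (h : Cofinal ξ η) (h' : Cofinal η θ) :
    Cofinal ξ θ :=
  let ⟨N, hN⟩ := h
  let ⟨M, hM⟩ := h'
  ⟨max N M, fun n hn => (hN n (le_of_max_le_left hn)).trans (hM n (le_of_max_le_right hn))⟩

theorem IsRootedIso.symm {d m : ℕ} {ω : ℕ → ((Fin m → ZMod d) →+ ZMod d)} {ξ η : Bd d}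
    {φ : Cof ξ ≃ Cof η} (hφ : IsRootedIso d m ω ξ η φ) : IsRootedIso d m ω η ξ φ.symm :=
  ⟨by rw [← hφ.1, Equiv.symm_apply_apply], fun u v => by
    rw [hφ.2 (φ.symm u) (φ.symm v), Equiv.apply_symm_apply, Equiv.apply_symm_apply]⟩

theorem ZMod.two_eq_zero_or_eq_one (x : ZMod 2) : x = 0 ∨ x = 1 := by
  revert x; decide

theorem ZMod.eq_add_one_of_ne {x y : ZMod 2} (h : x ≠ y) : y = x + 1 := by
  revert x y; decide

open Function

namespace Spinal

def flipAt (k : ℕ) (ζ : Bd 2) : Bd 2 := update ζ k (ζ k + 1)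

theorem flipAt_self (k : ℕ) (ζ : Bd 2) : flipAt k ζ k = ζ k + 1 := update_self ..

theorem flipAt_of_ne {k n : ℕ} (h : n ≠ k) (ζ : Bd 2) : flipAt k ζ n = ζ n :=
  update_of_ne h ..

theorem flipAt_involutive (k : ℕ) : Involutive (flipAt k) := fun ζ => by
  ext n
  rcases eq_or_ne n k with rfl | h
  · rw [flipAt_self, flipAt_self, add_assoc, CharTwo.add_self_eq_zero, add_zero]
  · simp only [flipAt_of_ne h]

theorem flipAt_ne_self (k : ℕ) (ζ : Bd 2) : flipAt k ζ ≠ ζ := fun h => by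
  simpa [flipAt_self] using congrFun h k

theorem flipAt_injective_left (ζ : Bd 2) : Injective fun k => flipAt k ζ := by
  intro k k' h
  by_contra hk
  simpa [flipAt_self, flipAt_of_ne hk] using congrFun h k

theorem eq_flipAt_of_ne {ζ ζ' : Bd 2} {k : ℕ} (hk : ζ k ≠ ζ' k)
    (h : ∀ n, n ≠ k → ζ n = ζ' n) : ζ' = flipAt k ζ := by
  ext n
  rcases eq_or_ne n k with rfl | hn
  · rw [flipAt_self, ZMod.eq_add_one_of_ne hk]
  · rw [flipAt_of_ne hn, h n hn]

theorem aMap_two : aMap 2 = flipAt 0 := by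
  ext ζ n
  rcases eq_or_ne n 0 with rfl | hn
  · simp [aMap, flipAt_self]
  · simp [aMap, flipAt_of_ne hn, hn]

theorem aMap_involutive : Involutive (aMap 2) :=
  aMap_two ▸ flipAt_involutive 0

theorem aMap_ne_self (ζ : Bd 2) : aMap 2 ζ ≠ ζ := by
  rw [aMap_two]; exact flipAt_ne_self 0 ζ

def IsFirstZero (ζ : Bd 2) (r : ℕ) : Prop := ζ r = 0 ∧ ∀ i < r, ζ i = 1

theorem IsFirstZero.unique {ζ : Bd 2} {r s : ℕ} (hr : IsFirstZero ζ r) (hs : IsFirstZero ζ s) :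
    r = s := by
  by_contra h
  rcases lt_or_gt_of_ne h with h | h
  · simpa [hr.1] using hs.2 r h
  · simpa [hs.1] using hr.2 s h

theorem exists_isFirstZero {ζ : Bd 2} (h : ζ ≠ 1) : ∃ r, IsFirstZero ζ r := by
  have hz : ∃ i, ζ i = 0 := by
    by_contra! hz
    exact h (funext fun i => (ZMod.two_eq_zero_or_eq_one _).resolve_left (hz i))
  exact ⟨Nat.find hz, Nat.find_spec hz, fun i hi =>
    (ZMod.two_eq_zero_or_eq_one _).resolve_left (Nat.find_min hz hi)⟩

theorem exists_isFirstZero_forall_lt_eq (r : ℕ) (ζ : Bd 2) :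
    ∃ u, IsFirstZero u r ∧ ∀ n, r < n → u n = ζ n :=
  ⟨fun i => if i < r then 1 else if i = r then 0 else ζ i, ⟨by simp, fun i hi => by simp [hi]⟩,
    fun n hn => by simp only; rw [if_neg (by omega), if_neg (by omega)]⟩

theorem IsFirstZero.flipAt_succ {ζ : Bd 2} {r : ℕ} (hr : IsFirstZero ζ r) :
    IsFirstZero (flipAt (r + 1) ζ) r :=
  ⟨by rw [flipAt_of_ne (by omega), hr.1], fun i hi => by rw [flipAt_of_ne (by omega), hr.2 i hi]⟩

theorem IsFirstZero.ne_one {ζ : Bd 2} {r : ℕ} (hr : IsFirstZero ζ r) : ζ ≠ 1 := fun h => by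
  simpa [h] using hr.1

open scoped Classical in
def bStep (ζ : Bd 2) : Bd 2 :=
  if h : ∃ r, IsFirstZero ζ r then flipAt (h.choose + 1) ζ else ζ

theorem bStep_eq {ζ : Bd 2} {r : ℕ} (hr : IsFirstZero ζ r) : bStep ζ = flipAt (r + 1) ζ := by
  have h : ∃ r, IsFirstZero ζ r := ⟨r, hr⟩
  rw [bStep, dif_pos h, h.choose_spec.unique hr]

theorem bStep_one : bStep 1 = 1 :=
  dif_neg fun ⟨_, hr⟩ => hr.ne_one rfl

theorem bStep_involutive : Involutive bStep := fun ζ => by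
  rcases eq_or_ne ζ 1 with rfl | h
  · rw [bStep_one, bStep_one]
  · obtain ⟨r, hr⟩ := exists_isFirstZero h
    rw [bStep_eq hr, bStep_eq hr.flipAt_succ, flipAt_involutive]

theorem bStep_eq_self_iff {ζ : Bd 2} : bStep ζ = ζ ↔ ζ = 1 := by
  refine ⟨fun h => by_contra fun h1 => ?_, fun h => h ▸ bStep_one⟩
  obtain ⟨r, hr⟩ := exists_isFirstZero h1
  exact flipAt_ne_self _ _ ((bStep_eq hr).symm.trans h)

theorem bStep_apply_zero (ζ : Bd 2) : bStep ζ 0 = ζ 0 := by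
  rcases eq_or_ne ζ 1 with rfl | h
  · rw [bStep_one]
  · obtain ⟨r, hr⟩ := exists_isFirstZero h
    rw [bStep_eq hr, flipAt_of_ne (by omega)]

theorem aMap_ne_bStep (ζ : Bd 2) : aMap 2 ζ ≠ bStep ζ := fun h => by
  simpa [aMap_two, flipAt_self, bStep_apply_zero] using congrFun h 0

section Generators

variable {m : ℕ} {ω : ℕ → ((Fin m → ZMod 2) →+ ZMod 2)}

theorem bMap_eq_update_s6 {ζ : Bd 2} {r : ℕ} (hr : IsFirstZero ζ r) (b : Fin m → ZMod 2) :
    bMap 2 m ω b ζ = update ζ (r + 1) (ζ (r + 1) + ω r b) := by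
  have hcond : ∀ n, (n ≠ 0 ∧ (∀ i, i < n - 1 → ζ i = ((2 : ℕ) : ZMod 2) - 1) ∧ ζ (n - 1) = 0)
      ↔ n = r + 1 := by
    have h21 : ((2 : ℕ) : ZMod 2) - 1 = 1 := by decide
    intro n
    simp only [h21]
    refine ⟨fun ⟨hn, hlt, hz⟩ => ?_, fun h => ?_⟩
    · have := (show IsFirstZero ζ (n - 1) from ⟨hz, hlt⟩).unique hr
      omega
    · subst h
      exact ⟨by omega, hr.2, hr.1⟩
  ext n
  simp only [bMap]
  rcases eq_or_ne n (r + 1) with rfl | hn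
  · rw [if_pos ((hcond _).2 rfl), update_self, Nat.add_sub_cancel]
  · rw [if_neg (mt (hcond n).1 hn), update_of_ne hn]

theorem bMap_eq {ζ : Bd 2} {r : ℕ} (hr : IsFirstZero ζ r) (b : Fin m → ZMod 2) :
    bMap 2 m ω b ζ = if ω r b = 0 then ζ else bStep ζ := by
  rw [bMap_eq_update_s6 hr, bStep_eq hr]
  rcases ZMod.two_eq_zero_or_eq_one (ω r b) with h | h <;> simp [h, flipAt]

theorem bMap_one (b : Fin m → ZMod 2) : bMap 2 m ω b 1 = 1 := by
  ext n
  simp [bMap]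

theorem bMap_eq_self_or_bStep (b : Fin m → ZMod 2) (ζ : Bd 2) :
    bMap 2 m ω b ζ = ζ ∨ bMap 2 m ω b ζ = bStep ζ := by
  rcases eq_or_ne ζ 1 with rfl | h
  · exact .inl (bMap_one b)
  · obtain ⟨r, hr⟩ := exists_isFirstZero h
    rw [bMap_eq hr]
    split_ifs <;> simp

theorem bMap_involutive (b : Fin m → ZMod 2) : Involutive (bMap 2 m ω b) := fun ζ => by
  rcases eq_or_ne ζ 1 with rfl | h
  · rw [bMap_one, bMap_one]
  · obtain ⟨r, hr⟩ := exists_isFirstZero h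
    have hr' : IsFirstZero (bStep ζ) r := bStep_eq hr ▸ hr.flipAt_succ
    by_cases hb : ω r b = 0 <;> simp [bMap_eq hr, bMap_eq hr', hb, bStep_involutive ζ]

variable (ω) in
open scoped Classical in
/-- For `d = 2` the only power of `a` in `S` is `a` itself, so `S` is indexed by `B`, with `a`
at `0`. -/
def gen (b : Fin m → ZMod 2) : Bd 2 → Bd 2 := if b = 0 then aMap 2 else bMap 2 m ω b

theorem genSet_eq_range : genSet 2 m ω = Set.range (gen ω) := by
  ext f
  constructor
  · rintro (⟨j, hj1, hj2, rfl⟩ | ⟨b, hb, rfl⟩)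
    · obtain rfl : j = 1 := by omega
      exact ⟨0, by simp [gen]⟩
    · exact ⟨b, by simp [gen, hb]⟩
  · rintro ⟨b, rfl⟩
    by_cases hb : b = 0
    · exact .inl ⟨1, le_rfl, le_rfl, by simp [gen, hb]⟩
    · exact .inr ⟨b, hb, by simp [gen, hb]⟩

theorem gen_injective (hω : InOmega 2 m ω) : Injective (gen ω) := by
  have hbMap : ∀ b b', bMap 2 m ω b = bMap 2 m ω b' → b = b' := by
    intro b b' h
    refine sub_eq_zero.1 (hω.2 0 _ fun r _ => ?_)
    obtain ⟨w, hr, -⟩ := exists_isFirstZero_forall_lt_eq r 0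
    have := congrFun (congrFun h w) (r + 1)
    rw [bMap_eq_update_s6 hr, bMap_eq_update_s6 hr, update_self, update_self] at this
    rw [map_sub, add_left_cancel this, sub_self]
  have haMap : ∀ b, aMap 2 ≠ bMap 2 m ω b := fun b h =>
    aMap_ne_self 1 (by rw [h, bMap_one])
  intro b b' h
  unfold gen at h
  split_ifs at h with hb hb'
  · rw [hb, hb']
  · exact absurd h (haMap b')
  · exact absurd h.symm (haMap b)
  · exact hbMap b b' h

theorem gen_apply_mem (b : Fin m → ZMod 2) (u : Bd 2) :
    gen ω b u = u ∨ gen ω b u = aMap 2 u ∨ gen ω b u = bStep u := by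
  unfold gen
  split_ifs
  · exact .inr (.inl rfl)
  · rcases bMap_eq_self_or_bStep (ω := ω) b u with h | h
    · exact .inl h
    · exact .inr (.inr h)

theorem gen_involutive (b : Fin m → ZMod 2) : Involutive (gen ω b) := by
  unfold gen
  split_ifs
  · exact aMap_involutive
  · exact bMap_involutive b

theorem gen_apply {u : Bd 2} {r : ℕ} (hr : IsFirstZero u r) (b : Fin m → ZMod 2) :
    gen ω b u = if b = 0 then aMap 2 u else if ω r b = 0 then u else bStep u := by
  unfold gen
  split_ifs <;> simp_all [bMap_eq hr]

theorem gen_apply_one (b : Fin m → ZMod 2) : gen ω b 1 = if b = 0 then aMap 2 1 else 1 := by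
  unfold gen
  split_ifs <;> simp [bMap_one]

end Generators

section Multiplicity

variable {m : ℕ} {ω : ℕ → ((Fin m → ZMod 2) →+ ZMod 2)}

theorem ncard_ker_and_compl_of_surjective {f : (Fin m → ZMod 2) →+ ZMod 2} (hf : Surjective f) :
    {b | f b = 0}.ncard = 2 ^ m / 2 ∧ {b | f b ≠ 0}.ncard = 2 ^ m / 2 := by
  have hker : {b | f b = 0}.ncard * 2 = 2 ^ m := by
    have := f.ker.card_mul_index
    rwa [AddSubgroup.index_ker, AddMonoidHom.range_eq_top.2 hf, AddSubgroup.card_top,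
      Nat.card_zmod, Nat.card_fun, Nat.card_zmod, Nat.card_fin, ← SetLike.coe_sort_coe,
      Nat.card_coe_set_eq, AddMonoidHom.coe_ker] at this
  have hsum : {b | f b = 0}.ncard + {b | f b ≠ 0}.ncard = 2 ^ m := by
    have := Set.ncard_add_ncard_compl {b | f b = 0}
    rwa [Nat.card_fun, Nat.card_zmod, Nat.card_fin] at this
  omega

theorem two_pow_div_two_pos (hω : InOmega 2 m ω) : 0 < 2 ^ m / 2 := by
  rw [← (ncard_ker_and_compl_of_surjective (hω.1 0)).1]
  exact (Set.ncard_pos (Set.toFinite _)).2 ⟨0, map_zero _⟩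

theorem mult_eq_ncard (hω : InOmega 2 m ω) (u v : Bd 2) :
    mult 2 m ω u v = {b | gen ω b u = v}.ncard := by
  have : {f | f ∈ genSet 2 m ω ∧ f u = v} = gen ω '' {b | gen ω b u = v} := by
    ext f
    simp only [genSet_eq_range, Set.mem_ofPred_eq, Set.mem_range, Set.mem_image]
    constructor
    · rintro ⟨⟨b, rfl⟩, hb⟩
      exact ⟨b, hb, rfl⟩
    · rintro ⟨b, hb, rfl⟩
      exact ⟨⟨b, rfl⟩, hb⟩
  rw [mult, ← Set.ncard_image_of_injective _ (gen_injective hω), ← this]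
  exact Nat.card_coe_set_eq _

theorem eq_or_eq_or_eq_of_mult_ne_zero {u v : Bd 2} (h : mult 2 m ω u v ≠ 0) :
    v = u ∨ v = aMap 2 u ∨ v = bStep u := by
  obtain ⟨⟨f, hf, rfl⟩⟩ := Nat.card_ne_zero.1 h |>.1
  rw [genSet_eq_range] at hf
  obtain ⟨b, rfl⟩ := hf
  exact gen_apply_mem b u

theorem mult_comm (u v : Bd 2) : mult 2 m ω u v = mult 2 m ω v u := by
  refine Nat.card_congr (Equiv.subtypeEquivRight fun f => and_congr_right fun hf => ?_)
  rw [genSet_eq_range] at hf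
  obtain ⟨b, rfl⟩ := hf
  exact ⟨fun h => h ▸ gen_involutive b u, fun h => h ▸ gen_involutive b v⟩

theorem mult_aMap (hω : InOmega 2 m ω) (u : Bd 2) : mult 2 m ω u (aMap 2 u) = 1 := by
  rw [mult_eq_ncard hω, ← Set.ncard_singleton (0 : Fin m → ZMod 2)]
  congr 1
  ext b
  simp only [Set.mem_ofPred_eq, Set.mem_singleton_iff, gen]
  split_ifs with hb
  · simp [hb]
  · rcases bMap_eq_self_or_bStep (ω := ω) b u with h | h <;> rw [h] <;> simp [hb, aMap_ne_self,
      aMap_ne_bStep, Ne.symm]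

theorem mult_self_of_ne_one (hω : InOmega 2 m ω) {u : Bd 2} (hu : u ≠ 1) :
    mult 2 m ω u u = 2 ^ m / 2 - 1 := by
  obtain ⟨r, hr⟩ := exists_isFirstZero hu
  have : {b | gen ω b u = u} = {b | ω r b = 0} \ {0} := by
    ext b
    by_cases hb : b = 0 <;>
      simp [gen_apply hr, hb, aMap_ne_self, bStep_eq_self_iff, hu]
  rw [mult_eq_ncard hω, this, Set.ncard_sdiff_singleton_of_mem (s := {b | ω r b = 0}) (map_zero _),
    (ncard_ker_and_compl_of_surjective (hω.1 r)).1]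

theorem mult_bStep_of_ne_one (hω : InOmega 2 m ω) {u : Bd 2} (hu : u ≠ 1) :
    mult 2 m ω u (bStep u) = 2 ^ m / 2 := by
  obtain ⟨r, hr⟩ := exists_isFirstZero hu
  have : {b | gen ω b u = bStep u} = {b | ω r b ≠ 0} := by
    ext b
    by_cases hb : b = 0 <;>
      simp [gen_apply hr, hb, aMap_ne_bStep, Ne.symm (bStep_eq_self_iff.not.2 hu)]
  rw [mult_eq_ncard hω, this, (ncard_ker_and_compl_of_surjective (hω.1 r)).2]

theorem mult_one_one (hω : InOmega 2 m ω) : mult 2 m ω 1 1 = 2 ^ m - 1 := by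
  have : {b | gen ω b 1 = 1} = {(0 : Fin m → ZMod 2)}ᶜ := by
    ext b
    by_cases hb : b = 0 <;> simp [gen_apply_one, hb, aMap_ne_self]
  rw [mult_eq_ncard hω, this, Set.ncard_compl, Set.ncard_singleton, Nat.card_fun, Nat.card_zmod,
    Nat.card_fin]

theorem mult_self_eq_mult_one_one_iff (hω : InOmega 2 m ω) {u : Bd 2} :
    mult 2 m ω u u = mult 2 m ω 1 1 ↔ u = 1 := by
  refine ⟨fun h => by_contra fun hu => ?_, fun h => h ▸ rfl⟩
  have := two_pow_div_two_pos hω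
  rw [mult_self_of_ne_one hω hu, mult_one_one hω] at h
  omega

end Multiplicity

theorem cofinal_flipAt (k : ℕ) (ζ : Bd 2) : Cofinal ζ (flipAt k ζ) :=
  ⟨k + 1, fun _ hn => (flipAt_of_ne (by omega) ζ).symm⟩

theorem cofinal_bStep (ζ : Bd 2) : Cofinal ζ (bStep ζ) := by
  rcases eq_or_ne ζ 1 with rfl | h
  · rw [bStep_one]; exact Cofinal.refl 1
  · obtain ⟨r, hr⟩ := exists_isFirstZero h
    rw [bStep_eq hr]; exact cofinal_flipAt _ ζ

theorem cof_infinite (ρ : Bd 2) : (Cof ρ).Infinite :=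
  Set.infinite_of_injective_forall_mem (flipAt_injective_left ρ) (cofinal_flipAt · ρ)

theorem mem_of_cofinal_of_forall_mem {S : Set (Bd 2)} (hA : ∀ ζ ∈ S, aMap 2 ζ ∈ S)
    (hB : ∀ ζ ∈ S, bStep ζ ∈ S) {ζ ζ' : Bd 2} (hζ : ζ ∈ S) (h : Cofinal ζ ζ') : ζ' ∈ S := by
  obtain ⟨N, hN⟩ := h
  induction N generalizing ζ ζ' with
  | zero => exact funext (fun n => hN n n.zero_le) ▸ hζ
  | succ N ih =>
    by_cases hNN : ζ N = ζ' N
    · exact ih hζ fun n hn => (eq_or_lt_of_le hn).elim (· ▸ hNN) (hN n)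
    cases N with
    | zero =>
      rw [eq_flipAt_of_ne hNN fun n hn => hN n (by omega), ← aMap_two]
      exact hA ζ hζ
    | succ k =>
      -- the letter at `k + 1` is flipped by `bStep` from the word `1^k 0` with the same tail
      obtain ⟨u, hu0, hu⟩ := exists_isFirstZero_forall_lt_eq k ζ
      refine ih (hB u (ih hζ fun n hn => (hu n hn).symm)) fun n hn => ?_
      rw [bStep_eq hu0]
      rcases eq_or_lt_of_le hn with rfl | hn
      · rw [flipAt_self, hu _ (by omega), ZMod.eq_add_one_of_ne hNN]
      · rw [flipAt_of_ne (by omega), hu n (by omega), hN n hn]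

def stepAt (n : ℤ) : Bd 2 → Bd 2 := if Even n then aMap 2 else bStep

theorem stepAt_zero : stepAt 0 = aMap 2 := if_pos (by decide)

theorem stepAt_neg_one : stepAt (-1) = bStep := if_neg (by decide)

theorem stepAt_involutive (n : ℤ) : Involutive (stepAt n) := by
  unfold stepAt
  split_ifs
  exacts [aMap_involutive, bStep_involutive]

theorem stepAt_eq_of_even_sub {n n' : ℤ} (h : Even (n' - n)) : stepAt n = stepAt n' := by
  simp only [stepAt, Int.even_sub.1 h]

theorem stepAt_ne_self (n : ℤ) {ζ : Bd 2} (hζ : ζ ≠ 1) : stepAt n ζ ≠ ζ := by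
  unfold stepAt
  split_ifs
  exacts [aMap_ne_self ζ, bStep_eq_self_iff.not.2 hζ]

theorem cofinal_stepAt (n : ℤ) (ζ : Bd 2) : Cofinal ζ (stepAt n ζ) := by
  unfold stepAt
  split_ifs
  exacts [aMap_two ▸ cofinal_flipAt 0 ζ, cofinal_bStep ζ]

def walkPerm : Equiv.Perm (Bd 2) := bStep_involutive.toPerm _ * aMap_involutive.toPerm _

/-- Closed form of the walk from `ρ` that alternates `a` and `bStep` (see `walk_add_one`). -/
def walk (ρ : Bd 2) (n : ℤ) : Bd 2 :=
  if Even n then (walkPerm ^ (n / 2)) ρ else aMap 2 ((walkPerm ^ (n / 2)) ρ)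

theorem walk_zero (ρ : Bd 2) : walk ρ 0 = ρ := by
  simp [walk]

theorem walk_add_one (ρ : Bd 2) (n : ℤ) : walk ρ (n + 1) = stepAt n (walk ρ n) := by
  obtain ⟨k, rfl | rfl⟩ := Int.even_or_odd' n
  · simp only [walk, stepAt, if_pos (even_two_mul k), if_neg (Int.not_even_two_mul_add_one k),
      show (2 * k + 1) / 2 = k by omega, show 2 * k / 2 = k by omega]
  · rw [show 2 * k + 1 + 1 = 2 * (k + 1) by ring]
    simp only [walk, stepAt, if_pos (even_two_mul _), if_neg (Int.not_even_two_mul_add_one k),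
      show 2 * (k + 1) / 2 = 1 + k by omega, show (2 * k + 1) / 2 = k by omega, zpow_one_add]
    rfl

theorem walk_eq_stepAt_walk_add_one (ρ : Bd 2) (n : ℤ) :
    walk ρ n = stepAt n (walk ρ (n + 1)) := by
  rw [walk_add_one, stepAt_involutive]

theorem cofinal_walk (ρ : Bd 2) (n : ℤ) : Cofinal ρ (walk ρ n) := by
  induction n using Int.induction_on with
  | zero => rw [walk_zero]; exact Cofinal.refl ρ
  | succ i ih => rw [walk_add_one]; exact ih.trans (cofinal_stepAt _ _)
  | pred i ih =>
    rw [walk_eq_stepAt_walk_add_one, sub_add_cancel]; exact ih.trans (cofinal_stepAt _ _)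

theorem stepAt_walk (ρ : Bd 2) (k n : ℤ) :
    stepAt k (walk ρ n) = walk ρ (n + 1) ∨ stepAt k (walk ρ n) = walk ρ (n - 1) := by
  by_cases h : Even (n - k)
  · exact .inl (by rw [walk_add_one, stepAt_eq_of_even_sub h])
  · refine .inr ?_
    rw [walk_eq_stepAt_walk_add_one ρ (n - 1), sub_add_cancel,
      stepAt_eq_of_even_sub (by rwa [sub_right_comm, Int.even_sub_one])]

theorem cof_subset_range_walk (ρ : Bd 2) : Cof ρ ⊆ Set.range (walk ρ) := by
  have hstep : ∀ k, ∀ ζ ∈ Set.range (walk ρ), stepAt k ζ ∈ Set.range (walk ρ) := by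
    rintro k _ ⟨n, rfl⟩
    rcases stepAt_walk ρ k n with h | h <;> exact ⟨_, h.symm⟩
  exact fun ζ => mem_of_cofinal_of_forall_mem (stepAt_zero ▸ hstep 0)
    (stepAt_neg_one ▸ hstep (-1)) ⟨0, walk_zero ρ⟩

theorem walk_add_eq_walk_add {ρ : Bd 2} {n n' : ℤ} (h : walk ρ n = walk ρ n')
    (he : Even (n' - n)) (j : ℤ) : walk ρ (n + j) = walk ρ (n' + j) := by
  induction j using Int.induction_on with
  | zero => simpa
  | succ i ih =>
    rw [← add_assoc, ← add_assoc, walk_add_one, walk_add_one, ih,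
      stepAt_eq_of_even_sub (by rwa [add_sub_add_right_eq_sub])]
  | pred i ih =>
    have e : ∀ x : ℤ, x + (-i - 1) + 1 = x + -i := fun x => by ring
    rw [walk_eq_stepAt_walk_add_one ρ (n + _), walk_eq_stepAt_walk_add_one ρ (n' + _), e, e, ih,
      stepAt_eq_of_even_sub (by rwa [add_sub_add_right_eq_sub])]

theorem walk_add_eq_walk_sub {ρ : Bd 2} {n n' : ℤ} (h : walk ρ n = walk ρ n')
    (ho : Odd (n' - n)) (j : ℤ) : walk ρ (n + j) = walk ρ (n' - j) := by
  induction j using Int.induction_on with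
  | zero => simpa
  | succ i ih =>
    rw [← add_assoc, walk_add_one, ih, walk_eq_stepAt_walk_add_one ρ (n' - (i + 1)),
      show n' - (i + 1) + 1 = n' - i by ring, stepAt_eq_of_even_sub]
    rw [show n' - (i + 1) - (n + i) = (n' - n) - (2 * i + 1) by ring]
    exact ho.sub_odd (odd_two_mul_add_one _)
  | pred i ih =>
    rw [walk_eq_stepAt_walk_add_one ρ (n + _), show n + (-i - 1) + 1 = n + -i by ring, ih,
      show n' - (-i - 1) = n' - -i + 1 by ring, walk_add_one, stepAt_eq_of_even_sub]
    rw [show n' - -i - (n + (-i - 1)) = (n' - n) + (2 * i + 1) by ring]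
    exact ho.add_odd (odd_two_mul_add_one _)

theorem walk_ne_walk_of_even_sub (ρ : Bd 2) {n n' : ℤ} (hne : n ≠ n') (he : Even (n' - n)) :
    walk ρ n ≠ walk ρ n' := by
  intro h
  have hper : Periodic (walk ρ) (n' - n) := fun k => by
    convert (walk_add_eq_walk_add h he (k - n)).symm using 2 <;> ring
  have hper' : Periodic (walk ρ) |n' - n| := by
    rcases abs_choice (n' - n) with h | h <;> rw [h]
    exacts [hper, hper.neg]
  have hfin : (Set.range (walk ρ)).Finite := by
    refine ((Set.finite_Ico 0 |n' - n|).image (walk ρ)).subset ?_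
    rintro _ ⟨x, rfl⟩
    obtain ⟨y, hy, hxy⟩ := hper'.exists_mem_Ico₀ (abs_pos.2 (sub_ne_zero.2 hne.symm)) x
    exact ⟨y, hy, hxy.symm⟩
  exact cof_infinite ρ (hfin.subset (cof_subset_range_walk ρ))

theorem walk_injective {ρ : Bd 2} (hρ : ¬ Cofinal ρ 1) : Injective (walk ρ) := by
  intro n n' h
  by_contra hne
  rcases Int.even_or_odd (n' - n) with he | ⟨j, hj⟩
  · exact walk_ne_walk_of_even_sub ρ hne he h
  · have := walk_add_eq_walk_sub h ⟨j, hj⟩ j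
    rw [show n' - j = n + j + 1 by omega, walk_add_one] at this
    exact stepAt_ne_self _ (fun h1 => hρ (h1 ▸ cofinal_walk ρ _)) this.symm

theorem walk_one_neg_one_sub (n : ℤ) : walk 1 (-1 - n) = walk 1 n := by
  have h : walk 1 (-1) = walk 1 0 := by
    rw [walk_eq_stepAt_walk_add_one, neg_add_cancel, walk_zero, stepAt_neg_one, bStep_one]
  simpa [sub_eq_add_neg] using walk_add_eq_walk_sub h (by decide) (-n)

theorem walk_one_natCast_injective : Injective fun k : ℕ => walk 1 k := by
  intro k k' h
  by_contra hne
  rcases Int.even_or_odd ((k' : ℤ) - k) with he | ⟨j, hj⟩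
  · exact walk_ne_walk_of_even_sub 1 (by exact_mod_cast hne) he h
  · refine walk_ne_walk_of_even_sub 1 (n := k) (n' := -1 - k') (by omega) ⟨-1 - k - j, by omega⟩ ?_
    rw [walk_one_neg_one_sub]
    exact h

theorem exists_natCast_walk_one {ζ : Bd 2} (h : ζ ∈ Cof 1) : ∃ k : ℕ, walk 1 k = ζ := by
  obtain ⟨n, rfl⟩ := cof_subset_range_walk 1 h
  rcases le_or_gt 0 n with hn | hn
  · exact ⟨n.toNat, by rw [Int.toNat_of_nonneg hn]⟩
  · exact ⟨(-1 - n).toNat, by rw [Int.toNat_of_nonneg (by omega), walk_one_neg_one_sub]⟩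

section Isomorphism

variable {m : ℕ} {ω : ℕ → ((Fin m → ZMod 2) →+ ZMod 2)}

theorem eq_walk_of_mult_ne_zero {ρ v : Bd 2} {n : ℤ} (h : mult 2 m ω (walk ρ n) v ≠ 0) :
    v = walk ρ n ∨ v = walk ρ (n + 1) ∨ v = walk ρ (n - 1) := by
  rcases eq_or_eq_or_eq_of_mult_ne_zero h with h | h | h
  · exact .inl h
  · rw [← stepAt_zero] at h; exact .inr (h ▸ stepAt_walk ρ 0 n)
  · rw [← stepAt_neg_one] at h; exact .inr (h ▸ stepAt_walk ρ (-1) n)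

def lineEdgeMult (m : ℕ) (n : ℤ) : ℕ := if Even n then 1 else 2 ^ m / 2

def lineMult (m : ℕ) (n n' : ℤ) : ℕ :=
  if n' = n then 2 ^ m / 2 - 1
  else if n' = n + 1 then lineEdgeMult m n
  else if n = n' + 1 then lineEdgeMult m n'
  else 0

theorem lineEdgeMult_pos (hω : InOmega 2 m ω) (n : ℤ) : 0 < lineEdgeMult m n := by
  unfold lineEdgeMult
  split_ifs
  exacts [one_pos, two_pow_div_two_pos hω]

theorem mult_stepAt (hω : InOmega 2 m ω) {u : Bd 2} (hu : u ≠ 1) (n : ℤ) :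
    mult 2 m ω u (stepAt n u) = lineEdgeMult m n := by
  unfold stepAt lineEdgeMult
  split_ifs
  exacts [mult_aMap hω u, mult_bStep_of_ne_one hω hu]

theorem mult_walk (hω : InOmega 2 m ω) {ρ : Bd 2} (hρ : ¬ Cofinal ρ 1) (n n' : ℤ) :
    mult 2 m ω (walk ρ n) (walk ρ n') = lineMult m n n' := by
  have hne : ∀ k, walk ρ k ≠ 1 := fun k h => hρ (h ▸ cofinal_walk ρ k)
  unfold lineMult
  split_ifs with h₀ h₁ h₂
  · rw [h₀, mult_self_of_ne_one hω (hne n)]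
  · rw [h₁, walk_add_one, mult_stepAt hω (hne n)]
  · rw [mult_comm, h₂, walk_add_one, mult_stepAt hω (hne n')]
  · by_contra h
    rcases eq_walk_of_mult_ne_zero h with h | h | h <;> have := walk_injective hρ h <;> omega

def walkEquiv {ρ : Bd 2} (hρ : ¬ Cofinal ρ 1) : ℤ ≃ Cof ρ :=
  Equiv.ofBijective (fun n => ⟨walk ρ n, cofinal_walk ρ n⟩)
    ⟨fun _ _ h => walk_injective hρ (congrArg Subtype.val h),
      fun ⟨_, hζ⟩ => let ⟨n, hn⟩ := cof_subset_range_walk ρ hζ; ⟨n, Subtype.ext hn⟩⟩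

theorem exists_isRootedIso (hω : InOmega 2 m ω) {ξ η : Bd 2} (hξ : ¬ Cofinal ξ 1)
    (hη : ¬ Cofinal η 1) : ∃ φ, IsRootedIso 2 m ω ξ η φ := by
  refine ⟨(walkEquiv hξ).symm.trans (walkEquiv hη), ?_, fun u v => ?_⟩
  · have : walkEquiv hξ 0 = ⟨ξ, self_mem_Cof ξ⟩ := Subtype.ext (walk_zero ξ)
    rw [Equiv.trans_apply, ← this, Equiv.symm_apply_apply]
    exact Subtype.ext (walk_zero η)
  · obtain ⟨n, rfl⟩ := (walkEquiv hξ).surjective u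
    obtain ⟨n', rfl⟩ := (walkEquiv hξ).surjective v
    simp only [Equiv.trans_apply, Equiv.symm_apply_apply]
    exact (mult_walk hω hξ n n').trans (mult_walk hω hη n n').symm

theorem mult_walk_one_ne_zero (hω : InOmega 2 m ω) (k : ℕ) :
    mult 2 m ω (walk 1 k) (walk 1 (k + 1 : ℕ)) ≠ 0 := by
  rw [Nat.cast_succ, walk_add_one]
  rcases eq_or_ne (walk 1 k) 1 with h1 | h1
  · obtain rfl : k = 0 := walk_one_natCast_injective (h1.trans (walk_zero 1).symm)
    rw [h1, Nat.cast_zero, stepAt_zero, mult_aMap hω]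
    exact one_ne_zero
  · exact (mult_stepAt hω h1 k ▸ lineEdgeMult_pos hω k).ne'

theorem eq_walk_one_of_mult_ne_zero {k : ℕ} {v : Bd 2} (h : mult 2 m ω (walk 1 k) v ≠ 0) :
    v = walk 1 (k + 1 : ℕ) ∨ ∃ j ≤ k, v = walk 1 j := by
  rcases eq_walk_of_mult_ne_zero h with h | h | h
  · exact .inr ⟨k, le_rfl, h⟩
  · exact .inl (by rw [h, Nat.cast_succ])
  · rcases k with _ | k
    · exact .inr ⟨0, le_rfl, h.trans (walk_one_neg_one_sub 0)⟩
    · exact .inr ⟨k, by omega, by rw [h, Nat.cast_succ, add_sub_cancel_right]⟩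

theorem apply_eq_self_of_cofinal_one (hω : InOmega 2 m ω) {ξ η : Bd 2} (φ : Cof ξ ≃ Cof η)
    (hφ : ∀ u v : Cof ξ, mult 2 m ω u v = mult 2 m ω (φ u) (φ v)) (hξ : Cofinal ξ 1)
    (u : Cof ξ) : (φ u : Bd 2) = u := by
  let g : ℕ → Cof ξ := fun k => ⟨walk 1 k, hξ.trans (cofinal_walk 1 k)⟩
  have hg : Injective g := fun k k' h => walk_one_natCast_injective (congrArg Subtype.val h)
  suffices ∀ k, (φ (g k) : Bd 2) = g k by
    obtain ⟨k, hk⟩ := exists_natCast_walk_one (hξ.symm.trans u.2)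
    rw [show u = g k from Subtype.ext hk.symm, this]
  intro k
  induction k using Nat.strong_induction_on with
  | _ k ih =>
  cases k with
  | zero =>
    have h1 : (g 0 : Bd 2) = 1 := walk_zero 1
    have := hφ (g 0) (g 0)
    rw [h1, eq_comm, mult_self_eq_mult_one_one_iff hω] at this
    rw [this, h1]
  | succ k =>
    have hedge : mult 2 m ω (φ (g k)) (φ (g (k + 1))) ≠ 0 := by
      rw [← hφ]; exact mult_walk_one_ne_zero hω k
    rw [ih k k.lt_succ_self] at hedge
    rcases eq_walk_one_of_mult_ne_zero (k := k) hedge with h | ⟨j, hj, h⟩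
    · exact h
    · have := hg (φ.injective (Subtype.ext (h.trans (ih j (by omega)).symm)))
      omega

theorem not_cofinal_one_of_isRootedIso (hω : InOmega 2 m ω) {ξ η : Bd 2} {φ : Cof ξ ≃ Cof η}
    (hφ : IsRootedIso 2 m ω ξ η φ) (hne : ξ ≠ η) : ¬ Cofinal ξ 1 := fun hξ => by
  have := apply_eq_self_of_cofinal_one hω φ hφ.2 hξ ⟨ξ, self_mem_Cof ξ⟩
  rw [hφ.1] at this
  exact hne this.symm

end Isomorphism

end Spinal

open Spinal

theorem rooted_iso_iff_d2_general (m : ℕ)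
    (ω : ℕ → ((Fin m → ZMod 2) →+ ZMod 2)) (hω : InOmega 2 m ω)
    (ξ η : Bd 2) (hne : ξ ≠ η) :
    (∃ φ : ↥(Cof ξ) ≃ ↥(Cof η), IsRootedIso 2 m ω ξ η φ) ↔
      ¬ Cofinal ξ (fun _ => (1 : ZMod 2)) ∧ ¬ Cofinal η (fun _ => (1 : ZMod 2)) :=
  ⟨fun ⟨_, hφ⟩ => ⟨not_cofinal_one_of_isRootedIso hω hφ hne,
      not_cofinal_one_of_isRootedIso hω hφ.symm hne.symm⟩,
    fun ⟨hξ, hη⟩ => exists_isRootedIso hω hξ hη⟩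

/-- for `d = 2`, `m ≥ 2`, `ω ∈ Ω_{2,m}` and distinct `ξ, η ∈ X^ℕ`, the
rooted graphs `(Γ_ξ, ξ)` and `(Γ_η, η)` are isomorphic as rooted, undirected, unlabeled
graphs iff neither `ξ` nor `η` is cofinal with the constant word `1^ℕ`. -/
theorem rooted_iso_iff_d2 (m : ℕ) (hm : 2 ≤ m)
    (ω : ℕ → ((Fin m → ZMod 2) →+ ZMod 2)) (hω : InOmega 2 m ω)
    (ξ η : Bd 2) (hne : ξ ≠ η) :
    (∃ φ : ↥(Cof ξ) ≃ ↥(Cof η), IsRootedIso 2 m ω ξ η φ) ↔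
      ¬ Cofinal ξ (fun _ => (1 : ZMod 2)) ∧ ¬ Cofinal η (fun _ => (1 : ZMod 2)) :=
  rooted_iso_iff_d2_general m ω hω ξ η hne

end
end

section
/- Let d ≥ 3, m ≥ 1, ω ∈ Ω_{d,m}, ξ, η ∈ X^ℕ, and let φ : (Γ_ξ, ξ) → (Γ_η, η) be an isomorphism of rooted, undirected, unlabeled graphs. Then for every ξ' ∈ Cof(ξ) and every n ≥ 0, φ maps Λ_{ξ'}^n onto Λ_{φ(ξ')}^n and Δ_{ξ'}^n onto Δ_{φ(ξ')}^n. -/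
open MeasureTheory

noncomputable section

/-- `Δ_{ξ'}^n`: the points agreeing with `ξ'` at every position `k ≥ n`. -/
def DeltaSet {d : ℕ} (ξ' : Bd d) (n : ℕ) : Set (Bd d) :=
  {η' | ∀ k, n ≤ k → η' k = ξ' k}

/-- `Λ_{ξ'}^n = (d-1)^n 0 X σ^{n+2}(ξ')`: the points with prefix `(d-1)^n 0` agreeing
with `ξ'` at every position `k ≥ n + 2`. -/
def LambdaSet (d : ℕ) (ξ' : Bd d) (n : ℕ) : Set (Bd d) :=
  {η' | (∀ i, i < n → η' i = (d : ZMod d) - 1) ∧ η' n = 0 ∧ ∀ k, n + 2 ≤ k → η' k = ξ' k}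

namespace SpinalAux

variable {d m : ℕ} {ω : ℕ → ((Fin m → ZMod d) →+ ZMod d)}

/-! ### ZMod facts -/

lemma zmod_one_ne_zero (hd : 3 ≤ d) : (1 : ZMod d) ≠ 0 := by
  haveI : Fact (1 < d) := ⟨by omega⟩
  exact one_ne_zero

lemma zmod_zero_ne (hd : 3 ≤ d) : (0 : ZMod d) ≠ (d : ZMod d) - 1 := by
  intro h
  rw [ZMod.natCast_self, zero_sub] at h
  exact zmod_one_ne_zero hd (by linear_combination h)

lemma zmod_one_ne (hd : 3 ≤ d) : (1 : ZMod d) ≠ (d : ZMod d) - 1 := by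
  haveI : NeZero d := ⟨by omega⟩
  intro h
  rw [ZMod.natCast_self, zero_sub] at h
  have h2 : ((2 : ℕ) : ZMod d) = 0 := by push_cast; linear_combination h
  rw [ZMod.natCast_eq_zero_iff] at h2
  have := Nat.le_of_dvd (by norm_num) h2
  omega

/-! ### basic defs -/

def updAdd (u : Bd d) (p : ℕ) (c : ZMod d) : Bd d := fun k => if k = p then u k + c else u k

def Diff1 (u v : Bd d) (p : ℕ) : Prop := u p ≠ v p ∧ ∀ k, k ≠ p → u k = v k

def SpinalLev (u : Bd d) (r : ℕ) : Prop :=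
  (∀ i, i < r → u i = (d : ZMod d) - 1) ∧ u r = 0

def Spinal (u : Bd d) : Prop := ∃ r, SpinalLev u r

def DeltaRel (n : ℕ) (u v : Bd d) : Prop := ∀ k, n ≤ k → u k = v k

def TailDiff1 (n : ℕ) (u v : Bd d) (p : ℕ) : Prop :=
  n + 1 ≤ p ∧ u p ≠ v p ∧ ∀ k, n + 1 ≤ k → k ≠ p → u k = v k

def SuppAt (n : ℕ) (u : Bd d) (p : ℕ) : Prop :=
  (∀ i, n + 1 ≤ i → i + 2 ≤ p → u i = (d : ZMod d) - 1) ∧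
  (∀ j, n + 1 ≤ j → j + 1 = p → u j = 0)

def Closed (C : Set (Bd d)) : Prop := ∀ u ∈ C, ∀ v, Cofinal u v → v ∈ C

lemma closed_Cof (ξ : Bd d) : Closed (Cof ξ) := by
  rintro u ⟨N, hN⟩ v ⟨M, hM⟩
  exact ⟨max N M, fun n hn => (hN n (le_trans (le_max_left _ _) hn)).trans
    (hM n (le_trans (le_max_right _ _) hn))⟩

lemma updAdd_apply_self (u : Bd d) (p : ℕ) (c : ZMod d) : updAdd u p c p = u p + c := by
  simp [updAdd]

lemma updAdd_apply_ne (u : Bd d) (p : ℕ) (c : ZMod d) {k : ℕ} (h : k ≠ p) :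
    updAdd u p c k = u k := by simp [updAdd, h]

lemma cofinal_updAdd (u : Bd d) (p : ℕ) (c : ZMod d) : Cofinal u (updAdd u p c) :=
  ⟨p + 1, fun n hn => (updAdd_apply_ne u p c (by omega)).symm⟩

lemma mem_updAdd {C : Set (Bd d)} (hC : Closed C) {u : Bd d} (hu : u ∈ C) (p : ℕ)
    (c : ZMod d) : updAdd u p c ∈ C := hC u hu _ (cofinal_updAdd u p c)

lemma diff1_updAdd (u : Bd d) (p : ℕ) {c : ZMod d} (hc : c ≠ 0) :
    Diff1 u (updAdd u p c) p := by
  refine ⟨?_, fun k hk => (updAdd_apply_ne u p c hk).symm⟩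
  rw [updAdd_apply_self]
  intro h
  exact hc (by linear_combination -h)

lemma diff1_symm {u v : Bd d} {p : ℕ} (h : Diff1 u v p) : Diff1 v u p :=
  ⟨h.1.symm, fun k hk => (h.2 k hk).symm⟩

lemma spinalLev_unique (hd : 3 ≤ d) {u : Bd d} {r s : ℕ} (hr : SpinalLev u r)
    (hs : SpinalLev u s) : r = s := by
  by_contra hne
  rcases Nat.lt_or_ge r s with h | h
  · exact zmod_zero_ne hd (hr.2 ▸ hs.1 r h)
  · exact zmod_zero_ne hd (hs.2 ▸ hr.1 s (by omega))

lemma spinalLev_of_diff1 (hd : 3 ≤ d) {u v : Bd d} {r : ℕ} (hu : SpinalLev u r)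
    (h : Diff1 u v (r + 1)) : SpinalLev v r :=
  ⟨fun i hi => (h.2 i (by omega)).symm.trans (hu.1 i hi),
   (h.2 r (by omega)).symm.trans hu.2⟩

lemma spinal_zero_cases (hd : 3 ≤ d) {u : Bd d} (h : Spinal u) :
    u 0 = 0 ∨ u 0 = (d : ZMod d) - 1 := by
  obtain ⟨r, hr⟩ := h
  rcases Nat.eq_zero_or_pos r with h0 | h0
  · exact Or.inl (h0 ▸ hr.2)
  · exact Or.inr (hr.1 0 h0)

/-! ### generator action -/

lemma aMap_iterate (j : ℕ) (u : Bd d) :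
    (aMap d)^[j] u = fun n => if n = 0 then u 0 + (j : ZMod d) else u n := by
  induction j with
  | zero => funext n; by_cases h : n = 0 <;> simp [h]
  | succ j ih =>
    rw [Function.iterate_succ_apply', ih]
    funext n
    by_cases h : n = 0 <;> simp [aMap, h] <;> push_cast <;> ring

lemma bMap_apply_spinal (hd : 3 ≤ d) {u : Bd d} {r : ℕ} (h : SpinalLev u r)
    (b : Fin m → ZMod d) : bMap d m ω b u = updAdd u (r + 1) (ω r b) := by
  funext n
  by_cases hn : n = r + 1
  · subst hn
    rw [updAdd_apply_self]
    have hc : (r + 1 ≠ 0 ∧ (∀ i, i < r + 1 - 1 → u i = (d : ZMod d) - 1) ∧ u (r + 1 - 1) = 0) :=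
      ⟨by omega, by simpa using h.1, by simpa using h.2⟩
    simp only [bMap]
    rw [if_pos hc]
    simp
  · rw [updAdd_apply_ne _ _ _ hn]
    simp only [bMap]
    rw [if_neg]
    rintro ⟨h0, h1, h2⟩
    have : SpinalLev u (n - 1) := ⟨h1, h2⟩
    have := spinalLev_unique hd this h
    omega

lemma bMap_apply_not_spinal (hd : 3 ≤ d) {u : Bd d} (h : ¬ Spinal u)
    (b : Fin m → ZMod d) : bMap d m ω b u = u := by
  funext n
  simp only [bMap]
  rw [if_neg]
  rintro ⟨h0, h1, h2⟩
  exact h ⟨n - 1, h1, h2⟩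

lemma genSet_finite (hd : 3 ≤ d) : (genSet d m ω).Finite := by
  haveI : NeZero d := ⟨by omega⟩
  apply Set.Finite.union
  · have hs : {f | ∃ j, 1 ≤ j ∧ j ≤ d - 1 ∧ f = (aMap d)^[j]} ⊆
        (fun j => (aMap d)^[j]) '' (Set.Iic (d - 1)) := by
      rintro f ⟨j, _, hj, rfl⟩; exact ⟨j, hj, rfl⟩
    exact ((Set.finite_Iic _).image _).subset hs
  · have hs : {f | ∃ b, b ≠ 0 ∧ f = bMap d m ω b} ⊆ Set.range (bMap d m ω) := by
      rintro f ⟨b, _, rfl⟩; exact ⟨b, rfl⟩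
    exact (Set.finite_range _).subset hs

/-! ### the edge relation -/

def E (ω : ℕ → ((Fin m → ZMod d) →+ ZMod d)) (u v : Bd d) : Prop := mult d m ω u v ≠ 0

lemma E_iff_exists (hd : 3 ≤ d) {u v : Bd d} :
    E ω u v ↔ ∃ f ∈ genSet d m ω, f u = v := by
  have hfin : Finite {f : Bd d → Bd d // f ∈ genSet d m ω ∧ f u = v} := by
    have h1 : {f : Bd d → Bd d | f ∈ genSet d m ω ∧ f u = v}.Finite :=
      (genSet_finite hd).subset fun f hf => hf.1
    exact h1
  unfold E mult
  rw [Nat.card_ne_zero]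
  constructor
  · rintro ⟨⟨⟨f, hf, hfu⟩⟩, -⟩; exact ⟨f, hf, hfu⟩
  · rintro ⟨f, hf, hfu⟩; exact ⟨⟨⟨f, hf, hfu⟩⟩, hfin⟩

lemma E_intro_a (hd : 3 ≤ d) {u v : Bd d} (h : Diff1 u v 0) : E ω u v := by
  haveI : NeZero d := ⟨by omega⟩
  rw [E_iff_exists hd]
  set j : ℕ := (v 0 - u 0).val with hj
  have hx : v 0 - u 0 ≠ 0 := sub_ne_zero.mpr (Ne.symm h.1)
  have hj0 : j ≠ 0 := fun hh => hx (by rwa [ZMod.val_eq_zero] at hh)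
  have hjd : j < d := ZMod.val_lt _
  refine ⟨(aMap d)^[j], Or.inl ⟨j, by omega, by omega, rfl⟩, ?_⟩
  rw [aMap_iterate]
  funext k
  have hcast : ((j : ℕ) : ZMod d) = v 0 - u 0 := by
    rw [hj, ZMod.natCast_val, ZMod.cast_id]
  by_cases hk : k = 0
  · subst hk
    rw [if_pos rfl, hcast]
    ring
  · rw [if_neg hk]; exact h.2 k hk

lemma E_intro_b (hd : 3 ≤ d) (hω : InOmega d m ω) {u v : Bd d} {r : ℕ}
    (hr : SpinalLev u r) (h : Diff1 u v (r + 1)) : E ω u v := by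
  rw [E_iff_exists hd]
  obtain ⟨b, hb⟩ := hω.1 r (v (r + 1) - u (r + 1))
  have hb0 : b ≠ 0 := by
    rintro rfl
    rw [map_zero] at hb
    exact h.1 (by linear_combination hb)
  refine ⟨bMap d m ω b, Or.inr ⟨b, hb0, rfl⟩, ?_⟩
  rw [bMap_apply_spinal hd hr]
  funext k
  by_cases hk : k = r + 1
  · subst hk; rw [updAdd_apply_self, hb]; ring
  · rw [updAdd_apply_ne _ _ _ hk]; exact h.2 k hk

lemma E_elim (hd : 3 ≤ d) {u v : Bd d} (hne : u ≠ v) (h : E ω u v) :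
    Diff1 u v 0 ∨ ∃ r, SpinalLev u r ∧ Diff1 u v (r + 1) := by
  rw [E_iff_exists hd] at h
  obtain ⟨f, hf, hfu⟩ := h
  rcases hf with ⟨j, hj1, hj2, rfl⟩ | ⟨b, hb, rfl⟩
  · left
    rw [aMap_iterate] at hfu
    have h2 : ∀ k, k ≠ 0 → u k = v k := by
      intro k hk; rw [← hfu]; simp [hk]
    refine ⟨fun h0 => hne (funext fun k => ?_), h2⟩
    by_cases hk : k = 0
    · subst hk; exact h0
    · exact h2 k hk
  · by_cases hsp : Spinal u
    · obtain ⟨r, hr⟩ := hsp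
      right
      rw [bMap_apply_spinal hd hr] at hfu
      have h2 : ∀ k, k ≠ r + 1 → u k = v k := by
        intro k hk; rw [← hfu]; exact (updAdd_apply_ne _ _ _ hk).symm
      refine ⟨r, hr, fun h0 => hne (funext fun k => ?_), h2⟩
      by_cases hk : k = r + 1
      · subst hk; exact h0
      · exact h2 k hk
    · rw [bMap_apply_not_spinal hd hsp] at hfu
      exact absurd hfu hne

/-! ### three-point lemmas -/

lemma diff1_three {u v w : Bd d} {pi p q : ℕ} (huv : Diff1 u v pi) (huw : Diff1 u w p)
    (hvw : Diff1 v w q) : p = pi ∧ q = pi := by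
  have hp : p = pi := by
    by_contra hppi
    have hq : q = pi := by
      by_contra hqpi
      exact huv.1 ((huw.2 pi (Ne.symm hppi)).trans (hvw.2 pi (Ne.symm hqpi)).symm)
    exact huw.1 ((huv.2 p hppi).trans (hvw.2 p (by rw [hq]; exact hppi)))
  refine ⟨hp, ?_⟩
  by_contra hqpi
  exact hvw.1 (((huv.2 q hqpi).symm).trans (huw.2 q (by rw [hp]; exact hqpi)))

lemma tailDiff1_three {n : ℕ} {u v w : Bd d} {pi p q : ℕ} (huv : TailDiff1 n u v pi)
    (huw : TailDiff1 n u w p) (hvw : TailDiff1 n v w q) : p = pi ∧ q = pi := by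
  have hp : p = pi := by
    by_contra hppi
    have hq : q = pi := by
      by_contra hqpi
      exact huv.2.1 ((huw.2.2 pi huv.1 (Ne.symm hppi)).trans
        (hvw.2.2 pi huv.1 (Ne.symm hqpi)).symm)
    exact huw.2.1 ((huv.2.2 p huw.1 hppi).trans
      (hvw.2.2 p huw.1 (by rw [hq]; exact hppi)))
  refine ⟨hp, ?_⟩
  by_contra hqpi
  exact hvw.2.1 (((huv.2.2 q hvw.1 hqpi).symm).trans
    (huw.2.2 q hvw.1 (by rw [hp]; exact hqpi)))

end SpinalAux

namespace SpinalAux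

variable {d m : ℕ} {ω : ℕ → ((Fin m → ZMod d) →+ ZMod d)}

lemma zmod_two_ne_zero (hd : 3 ≤ d) : ((2 : ℕ) : ZMod d) ≠ 0 := by
  haveI : NeZero d := ⟨by omega⟩
  intro h
  rw [ZMod.natCast_eq_zero_iff] at h
  have := Nat.le_of_dvd (by norm_num) h
  omega

lemma updAdd_ne {u : Bd d} {p : ℕ} {c : ZMod d} (hc : c ≠ 0) : updAdd u p c ≠ u := by
  intro h
  have h0 := congrFun h p
  rw [updAdd_apply_self] at h0
  exact hc (by linear_combination h0)

lemma tailDiff1_symm {n : ℕ} {u v : Bd d} {p : ℕ} (h : TailDiff1 n u v p) :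
    TailDiff1 n v u p := ⟨h.1, h.2.1.symm, fun k h1 h2 => (h.2.2 k h1 h2).symm⟩

lemma suppAt_trivial (n : ℕ) (u : Bd d) : SuppAt n u (n + 1) :=
  ⟨fun i h1 h2 => by omega, fun j h1 h2 => by omega⟩

lemma suppAt_congr {n p : ℕ} {u v : Bd d} (h : ∀ k, n + 1 ≤ k → k + 1 ≤ p → u k = v k)
    (hs : SuppAt n u p) : SuppAt n v p :=
  ⟨fun i h1 h2 => (h i h1 (by omega)).symm.trans (hs.1 i h1 h2),
   fun j h1 h2 => (h j h1 (by omega)).symm.trans (hs.2 j h1 h2)⟩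

/-! ### spinal vertices, graph-theoretically -/

def SpA (ω : ℕ → ((Fin m → ZMod d) →+ ZMod d)) (C : Set (Bd d)) (u : Bd d) : Prop :=
  ∃ v ∈ C, ∃ w ∈ C, v ≠ u ∧ w ≠ u ∧ v ≠ w ∧ E ω u v ∧ E ω u w ∧ ¬ E ω v w

lemma spA_iff (hd : 3 ≤ d) (hω : InOmega d m ω) {C : Set (Bd d)} (hC : Closed C)
    {u : Bd d} (hu : u ∈ C) : SpA ω C u ↔ Spinal u := by
  constructor
  · rintro ⟨v, hv, w, hw, hvu, hwu, hvw, e1, e2, e3⟩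
    by_contra hns
    have d1 : Diff1 u v 0 := by
      rcases E_elim hd (Ne.symm hvu) e1 with h | ⟨r, hr, _⟩
      · exact h
      · exact absurd ⟨r, hr⟩ hns
    have d2 : Diff1 u w 0 := by
      rcases E_elim hd (Ne.symm hwu) e2 with h | ⟨r, hr, _⟩
      · exact h
      · exact absurd ⟨r, hr⟩ hns
    refine e3 (E_intro_a hd ⟨?_, fun k hk => (d1.2 k hk).symm.trans (d2.2 k hk)⟩)
    intro h0
    refine hvw (funext fun k => ?_)
    by_cases hk : k = 0
    · subst hk; exact h0
    · exact (d1.2 k hk).symm.trans (d2.2 k hk)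
  · rintro ⟨r, hr⟩
    have h1 : (1 : ZMod d) ≠ 0 := zmod_one_ne_zero hd
    have dv : Diff1 u (updAdd u 0 1) 0 := diff1_updAdd u 0 h1
    have dw : Diff1 u (updAdd u (r + 1) 1) (r + 1) := diff1_updAdd u (r + 1) h1
    refine ⟨updAdd u 0 1, mem_updAdd hC hu _ _, updAdd u (r + 1) 1, mem_updAdd hC hu _ _,
      updAdd_ne h1, updAdd_ne h1, ?_, E_intro_a hd dv, E_intro_b hd hω hr dw, ?_⟩
    · intro h
      have h0 := congrFun h 0
      rw [updAdd_apply_self, updAdd_apply_ne u _ _ (by omega : (0 : ℕ) ≠ r + 1)] at h0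
      exact h1 (by linear_combination h0)
    · intro he
      have hvw0 : updAdd u 0 1 0 ≠ updAdd u (r + 1) 1 0 := by
        rw [updAdd_apply_self, updAdd_apply_ne u _ _ (by omega : (0 : ℕ) ≠ r + 1)]
        intro h0
        exact h1 (by linear_combination h0)
      have hvwr : updAdd u 0 1 (r + 1) ≠ updAdd u (r + 1) 1 (r + 1) := by
        rw [updAdd_apply_self, updAdd_apply_ne u _ _ (by omega : r + 1 ≠ 0)]
        intro h0
        exact h1 (by linear_combination -h0)
      have hne : updAdd u 0 1 ≠ updAdd u (r + 1) 1 := fun h => hvw0 (congrFun h 0)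
      have : ∃ q, Diff1 (updAdd u 0 1) (updAdd u (r + 1) 1) q := by
        rcases E_elim hd hne he with h | ⟨s, _, h⟩
        · exact ⟨0, h⟩
        · exact ⟨s + 1, h⟩
      obtain ⟨q, hq⟩ := this
      have hq0 : q = 0 := by
        by_contra h0
        exact hvw0 (hq.2 0 (Ne.symm h0))
      have hqr : q = r + 1 := by
        by_contra h0
        exact hvwr (hq.2 (r + 1) (Ne.symm h0))
      omega

/-! ### b-edges, graph-theoretically -/

def BEA (ω : ℕ → ((Fin m → ZMod d) →+ ZMod d)) (C : Set (Bd d)) (u v : Bd d) : Prop :=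
  u ≠ v ∧ E ω u v ∧ SpA ω C u ∧ SpA ω C v ∧
  ∃ w ∈ C, w ≠ u ∧ w ≠ v ∧ SpA ω C w ∧ E ω u w ∧ E ω v w

lemma beA_iff (hd : 3 ≤ d) (hω : InOmega d m ω) {C : Set (Bd d)} (hC : Closed C)
    {u v : Bd d} (hu : u ∈ C) (hv : v ∈ C) :
    BEA ω C u v ↔ ∃ r, SpinalLev u r ∧ Diff1 u v (r + 1) := by
  constructor
  · rintro ⟨hne, he, hsu, hsv, w, hw, hwu, hwv, hsw, euw, evw⟩
    rcases E_elim hd hne he with huv0 | h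
    · exfalso
      obtain ⟨p, hp⟩ : ∃ p, Diff1 u w p := by
        rcases E_elim hd (Ne.symm hwu) euw with h | ⟨s, _, h⟩
        · exact ⟨0, h⟩
        · exact ⟨s + 1, h⟩
      obtain ⟨q, hq⟩ : ∃ q, Diff1 v w q := by
        rcases E_elim hd (Ne.symm hwv) evw with h | ⟨s, _, h⟩
        · exact ⟨0, h⟩
        · exact ⟨s + 1, h⟩
      obtain ⟨hp0, hq0⟩ := diff1_three huv0 hp hq
      subst hp0; subst hq0
      have hwu0 : w 0 ≠ u 0 := Ne.symm hp.1
      have hwv0 : w 0 ≠ v 0 := Ne.symm hq.1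
      rcases spinal_zero_cases hd ((spA_iff hd hω hC hu).mp hsu) with hu0 | hu0 <;>
        rcases spinal_zero_cases hd ((spA_iff hd hω hC hv).mp hsv) with hv0 | hv0 <;>
        rcases spinal_zero_cases hd ((spA_iff hd hω hC hw).mp hsw) with hw0 | hw0 <;>
        first
          | exact huv0.1 (hu0.trans hv0.symm)
          | exact hwu0 (hw0.trans hu0.symm)
          | exact hwv0 (hw0.trans hv0.symm)
    · exact h
  · rintro ⟨r, hr, h1⟩
    have hvr : SpinalLev v r := spinalLev_of_diff1 hd hr h1
    have h1' : (1 : ZMod d) ≠ 0 := zmod_one_ne_zero hd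
    set δ : ZMod d := v (r + 1) - u (r + 1) with hδ
    have hδ0 : δ ≠ 0 := sub_ne_zero.mpr (Ne.symm h1.1)
    set c : ZMod d := if δ = 1 then ((2 : ℕ) : ZMod d) else 1 with hc
    have hc0 : c ≠ 0 := by
      rw [hc]; split
      · exact zmod_two_ne_zero hd
      · exact h1'
    have hcδ : c ≠ δ := by
      rw [hc]; split
      · rename_i hδ1
        rw [hδ1]
        intro h0
        exact h1' (by push_cast at h0 ⊢; linear_combination h0)
      · rename_i hδ1
        exact fun h0 => hδ1 h0.symm
    have dw : Diff1 u (updAdd u (r + 1) c) (r + 1) := diff1_updAdd u (r + 1) hc0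
    have hwv : updAdd u (r + 1) c ≠ v := by
      intro h0
      have := congrFun h0 (r + 1)
      rw [updAdd_apply_self] at this
      exact hcδ (by rw [hδ]; linear_combination this)
    refine ⟨fun h0 => h1.1 (congrFun h0 (r + 1)), E_intro_b hd hω hr h1,
      (spA_iff hd hω hC hu).mpr ⟨r, hr⟩, (spA_iff hd hω hC hv).mpr ⟨r, hvr⟩,
      updAdd u (r + 1) c, mem_updAdd hC hu _ _, updAdd_ne hc0, hwv,
      (spA_iff hd hω hC (mem_updAdd hC hu _ _)).mpr ⟨r, spinalLev_of_diff1 hd hr dw⟩,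
      E_intro_b hd hω hr dw, E_intro_b hd hω hvr ?_⟩
    refine ⟨?_, fun k hk => (h1.2 k hk).symm.trans (dw.2 k hk)⟩
    rw [updAdd_apply_self]
    intro h0
    exact hcδ (by rw [hδ]; linear_combination -h0)

end SpinalAux

namespace SpinalAux

variable {d m : ℕ} {ω : ℕ → ((Fin m → ZMod d) →+ ZMod d)}

/-! ### bridged classes -/

def BridgedA (ω : ℕ → ((Fin m → ZMod d) →+ ZMod d)) (C : Set (Bd d))
    (D : Bd d → Bd d → Prop) (u v : Bd d) : Prop :=
  ¬ D u v ∧ ∃ p ∈ C, ∃ q ∈ C, D u p ∧ D v q ∧ BEA ω C p q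

lemma bridgedA_iff (hd : 3 ≤ d) (hω : InOmega d m ω) {C : Set (Bd d)} (hC : Closed C)
    {u v : Bd d} (hu : u ∈ C) (hv : v ∈ C) (n : ℕ) :
    BridgedA ω C (DeltaRel (n + 1)) u v ↔ ∃ p, TailDiff1 n u v p ∧ SuppAt n u p := by
  constructor
  · rintro ⟨hnd, p, hp, q, hq, hup, hvq, hbe⟩
    obtain ⟨r, hr, h1⟩ := (beA_iff hd hω hC hp hq).mp hbe
    have hle : n + 1 ≤ r + 1 := by
      by_contra hcon
      refine hnd fun k hk => ?_
      exact ((hup k hk).trans (h1.2 k (by omega))).trans (hvq k hk).symm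
    refine ⟨r + 1, ⟨hle, ?_, fun k hk1 hk2 => ?_⟩, ?_, ?_⟩
    · rw [hup (r + 1) hle, hvq (r + 1) hle]
      exact h1.1
    · exact ((hup k hk1).trans (h1.2 k hk2)).trans (hvq k hk1).symm
    · exact fun i hi1 hi2 => (hup i hi1).trans (hr.1 i (by omega))
    · intro j hj1 hj2
      have hjr : j = r := by omega
      subst hjr
      exact (hup j hj1).trans hr.2
  · rintro ⟨p, htd, hsp⟩
    obtain ⟨s, rfl⟩ : ∃ s, p = s + 1 := ⟨p - 1, by have := htd.1; omega⟩
    set pp : Bd d := fun k => if k < s then (d : ZMod d) - 1 else if k = s then 0 else u k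
      with hpp
    set qq : Bd d := fun k => if k = s + 1 then v k else pp k with hqq
    have hpps : SpinalLev pp s := by
      constructor
      · intro i hi; simp [hpp, hi]
      · simp [hpp]
    have hppu : ∀ k, s + 1 ≤ k → pp k = u k := by
      intro k hk
      simp only [hpp]
      rw [if_neg (by omega), if_neg (by omega)]
    have hmempp : pp ∈ C := hC u hu pp ⟨s + 1, fun k hk => (hppu k hk).symm⟩
    have hqqu : ∀ k, s + 2 ≤ k → qq k = u k := by
      intro k hk
      simp only [hqq]
      rw [if_neg (by omega)]
      exact hppu k (by omega)
    have hmemqq : qq ∈ C := hC u hu qq ⟨s + 2, fun k hk => (hqqu k hk).symm⟩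
    have hDup : DeltaRel (n + 1) u pp := by
      intro k hk
      rcases Nat.lt_trichotomy k s with h | h | h
      · rw [hsp.1 k hk (by omega)]
        simp [hpp, h]
      · subst h
        rw [hsp.2 k hk rfl]
        simp [hpp]
      · exact (hppu k (by omega)).symm
    have hDvq : DeltaRel (n + 1) v qq := by
      intro k hk
      by_cases hks : k = s + 1
      · subst hks; simp [hqq]
      · have hvu : v k = u k := (htd.2.2 k hk hks).symm
        rw [hvu]
        simp only [hqq, if_neg hks]
        rcases Nat.lt_trichotomy k s with h | h | h
        · rw [hsp.1 k hk (by omega)]; simp [hpp, h]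
        · subst h; rw [hsp.2 k hk rfl]; simp [hpp]
        · exact (hppu k (by omega)).symm
    have hpps1 : pp (s + 1) = u (s + 1) := hppu _ le_rfl
    have hbe : BEA ω C pp qq := by
      refine (beA_iff hd hω hC hmempp hmemqq).mpr ⟨s, hpps, ?_, fun k hk => ?_⟩
      · rw [hpps1]
        simp only [hqq, if_pos rfl]
        exact htd.2.1
      · simp only [hqq, if_neg hk]
    exact ⟨fun h => htd.2.1 (h (s + 1) htd.1), pp, hmempp, qq, hmemqq, hDup, hDvq, hbe⟩

/-! ### higher support -/

def HSA (ω : ℕ → ((Fin m → ZMod d) →+ ZMod d)) (C : Set (Bd d))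
    (D : Bd d → Bd d → Prop) (u : Bd d) : Prop :=
  ∃ v ∈ C, ∃ w ∈ C, BridgedA ω C D u v ∧ BridgedA ω C D u w ∧ ¬ D v w ∧
    ¬ BridgedA ω C D v w

lemma hsA_iff (hd : 3 ≤ d) (hω : InOmega d m ω) {C : Set (Bd d)} (hC : Closed C)
    {u : Bd d} (hu : u ∈ C) (n : ℕ) :
    HSA ω C (DeltaRel (n + 1)) u ↔ ∃ p, n + 2 ≤ p ∧ SuppAt n u p := by
  constructor
  · rintro ⟨v, hv, w, hw, huv, huw, hnD, hnB⟩
    obtain ⟨p1, td1, sp1⟩ := (bridgedA_iff hd hω hC hu hv n).mp huv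
    obtain ⟨p2, td2, sp2⟩ := (bridgedA_iff hd hω hC hu hw n).mp huw
    by_cases h12 : p1 = p2
    · exfalso
      subst h12
      have hagree : ∀ k, n + 1 ≤ k → k ≠ p1 → v k = w k := by
        intro k hk1 hk2
        exact (td1.2.2 k hk1 hk2).symm.trans (td2.2.2 k hk1 hk2)
      by_cases hvw : v p1 = w p1
      · refine hnD fun k hk => ?_
        by_cases hkp : k = p1
        · subst hkp; exact hvw
        · exact hagree k hk hkp
      · refine hnB ((bridgedA_iff hd hω hC hv hw n).mpr ⟨p1, ⟨td1.1, hvw, hagree⟩, ?_⟩)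
        exact suppAt_congr (fun k hk1 hk2 => td1.2.2 k hk1 (by omega)) sp1
    · rcases Nat.lt_or_ge p1 p2 with h | h
      · exact ⟨p2, by have := td1.1; omega, sp2⟩
      · exact ⟨p1, by have := td2.1; omega, sp1⟩
  · rintro ⟨p, hp2, hsp⟩
    have h1 : (1 : ZMod d) ≠ 0 := zmod_one_ne_zero hd
    set v : Bd d := updAdd u (n + 1) 1 with hvdef
    set w : Bd d := updAdd u p 1 with hwdef
    have hvmem : v ∈ C := mem_updAdd hC hu _ _
    have hwmem : w ∈ C := mem_updAdd hC hu _ _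
    have dv : Diff1 u v (n + 1) := diff1_updAdd u (n + 1) h1
    have dw : Diff1 u w p := diff1_updAdd u p h1
    have hbv : BridgedA ω C (DeltaRel (n + 1)) u v :=
      (bridgedA_iff hd hω hC hu hvmem n).mpr
        ⟨n + 1, ⟨le_rfl, dv.1, fun k _ hk2 => dv.2 k hk2⟩, suppAt_trivial n u⟩
    have hbw : BridgedA ω C (DeltaRel (n + 1)) u w :=
      (bridgedA_iff hd hω hC hu hwmem n).mpr
        ⟨p, ⟨by omega, dw.1, fun k _ hk2 => dw.2 k hk2⟩, hsp⟩
    have hvn : v (n + 1) = u (n + 1) + 1 := updAdd_apply_self u (n + 1) 1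
    have hwn : w (n + 1) = u (n + 1) := updAdd_apply_ne u p 1 (by omega)
    have hvp : v p = u p := updAdd_apply_ne u (n + 1) 1 (by omega)
    have hwp : w p = u p + 1 := updAdd_apply_self u p 1
    have hvwn : v (n + 1) ≠ w (n + 1) := by
      rw [hvn, hwn]; intro h0; exact h1 (by linear_combination h0)
    have hvwp : v p ≠ w p := by
      rw [hvp, hwp]; intro h0; exact h1 (by linear_combination -h0)
    refine ⟨v, hvmem, w, hwmem, hbv, hbw, fun h => hvwn (h (n + 1) le_rfl), ?_⟩
    intro hb
    obtain ⟨q, tdq, -⟩ := (bridgedA_iff hd hω hC hvmem hwmem n).mp hb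
    have hq1 : q = n + 1 := by
      by_contra h0
      exact hvwn (tdq.2.2 (n + 1) le_rfl (Ne.symm h0))
    have hq2 : q = p := by
      by_contra h0
      exact hvwp (tdq.2.2 p (by omega) (Ne.symm h0))
    omega

/-! ### adjacency at the distinguished position -/

def AdjA (ω : ℕ → ((Fin m → ZMod d) →+ ZMod d)) (C : Set (Bd d))
    (D : Bd d → Bd d → Prop) (u v : Bd d) : Prop :=
  BridgedA ω C D u v ∧ ∃ M ∈ C,
    (D M u ∨ D M v ∨ (BridgedA ω C D M u ∧ BridgedA ω C D M v)) ∧ ¬ HSA ω C D M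

lemma adjA_iff (hd : 3 ≤ d) (hω : InOmega d m ω) {C : Set (Bd d)} (hC : Closed C)
    {u v : Bd d} (hu : u ∈ C) (hv : v ∈ C) (n : ℕ) :
    AdjA ω C (DeltaRel (n + 1)) u v ↔ TailDiff1 n u v (n + 1) := by
  constructor
  · rintro ⟨hb, M, hM, hdis, hnHS⟩
    obtain ⟨p, td, sp⟩ := (bridgedA_iff hd hω hC hu hv n).mp hb
    have hp : p = n + 1 := by
      by_contra hpn
      have hpge : n + 2 ≤ p := by have := td.1; omega
      refine hnHS ((hsA_iff hd hω hC hM n).mpr ⟨p, hpge, ?_⟩)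
      rcases hdis with hDu | hDv | ⟨bMu, bMv⟩
      · exact suppAt_congr (fun k hk1 _ => (hDu k hk1).symm) sp
      · have spv : SuppAt n v p :=
          suppAt_congr (fun k hk1 hk2 => td.2.2 k hk1 (by omega)) sp
        exact suppAt_congr (fun k hk1 _ => (hDv k hk1).symm) spv
      · obtain ⟨p1, td1, sp1⟩ := (bridgedA_iff hd hω hC hM hu n).mp bMu
        obtain ⟨p2, td2, sp2⟩ := (bridgedA_iff hd hω hC hM hv n).mp bMv
        have := tailDiff1_three td (tailDiff1_symm td1) (tailDiff1_symm td2)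
        rw [← this.1]
        exact sp1
    subst hp
    exact td
  · intro td
    have h1 : (1 : ZMod d) ≠ 0 := zmod_one_ne_zero hd
    have hb : BridgedA ω C (DeltaRel (n + 1)) u v :=
      (bridgedA_iff hd hω hC hu hv n).mpr ⟨n + 1, td, suppAt_trivial n u⟩
    set M : Bd d := fun k => if k = n + 1 then 1 else u k with hMdef
    have hMu : ∀ k, k ≠ n + 1 → M k = u k := by
      intro k hk; simp only [hMdef, if_neg hk]
    have hMn : M (n + 1) = 1 := by simp [hMdef]
    have hMmem : M ∈ C := hC u hu M ⟨n + 2, fun k hk => (hMu k (by omega)).symm⟩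
    have hnHS : ¬ HSA ω C (DeltaRel (n + 1)) M := by
      intro hHS
      obtain ⟨p, hp, spM⟩ := (hsA_iff hd hω hC hMmem n).mp hHS
      by_cases hpn : p = n + 2
      · have := spM.2 (n + 1) le_rfl (by omega)
        rw [hMn] at this
        exact h1 this
      · have := spM.1 (n + 1) le_rfl (by omega)
        rw [hMn] at this
        exact zmod_one_ne hd this
    refine ⟨hb, M, hMmem, ?_, hnHS⟩
    by_cases hu1 : u (n + 1) = 1
    · left
      intro k hk
      by_cases hkn : k = n + 1
      · subst hkn; rw [hMn, hu1]
      · exact hMu k hkn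
    · by_cases hv1 : v (n + 1) = 1
      · right; left
        intro k hk
        by_cases hkn : k = n + 1
        · subst hkn; rw [hMn, hv1]
        · exact (hMu k hkn).trans (td.2.2 k hk hkn)
      · right; right
        constructor
        · refine (bridgedA_iff hd hω hC hMmem hu n).mpr
            ⟨n + 1, ⟨le_rfl, ?_, fun k _ hk2 => hMu k hk2⟩, suppAt_trivial n M⟩
          rw [hMn]; exact fun h => hu1 h.symm
        · refine (bridgedA_iff hd hω hC hMmem hv n).mpr
            ⟨n + 1, ⟨le_rfl, ?_, fun k hk1 hk2 => (hMu k hk2).trans (td.2.2 k hk1 hk2)⟩,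
              suppAt_trivial n M⟩
          rw [hMn]; exact fun h => hv1 h.symm

/-! ### the recursion -/

lemma deltaRel_succ_iff (n : ℕ) (u v : Bd d) :
    DeltaRel (n + 2) u v ↔ DeltaRel (n + 1) u v ∨ TailDiff1 n u v (n + 1) := by
  constructor
  · intro h
    by_cases h1 : u (n + 1) = v (n + 1)
    · left
      intro k hk
      by_cases hkn : k = n + 1
      · subst hkn; exact h1
      · exact h k (by omega)
    · right
      exact ⟨le_rfl, h1, fun k hk1 hk2 => h k (by omega)⟩
  · rintro (h | h)
    · exact fun k hk => h k (by omega)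
    · exact fun k hk => h.2.2 k (by omega) (by omega)

lemma lambda_iff (n : ℕ) (u x : Bd d) :
    u ∈ LambdaSet d x n ↔ SpinalLev u n ∧ DeltaRel (n + 2) u x := by
  constructor
  · rintro ⟨h1, h2, h3⟩
    exact ⟨⟨h1, h2⟩, fun k hk => h3 k hk⟩
  · rintro ⟨⟨h1, h2⟩, h3⟩
    exact ⟨h1, h2, fun k hk => h3 k hk⟩

lemma spinalLev_iff_graph (hd : 3 ≤ d) (hω : InOmega d m ω) {C : Set (Bd d)}
    (hC : Closed C) {u : Bd d} (hu : u ∈ C) (n : ℕ) :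
    SpinalLev u n ↔ ∃ q ∈ C, BEA ω C u q ∧ ¬ DeltaRel (n + 1) u q ∧
      DeltaRel (n + 2) u q := by
  constructor
  · intro h
    have h1 : (1 : ZMod d) ≠ 0 := zmod_one_ne_zero hd
    have dq : Diff1 u (updAdd u (n + 1) 1) (n + 1) := diff1_updAdd u (n + 1) h1
    refine ⟨updAdd u (n + 1) 1, mem_updAdd hC hu _ _,
      (beA_iff hd hω hC hu (mem_updAdd hC hu _ _)).mpr ⟨n, h, dq⟩,
      fun hD => dq.1 (hD (n + 1) le_rfl), fun k hk => dq.2 k (by omega)⟩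
  · rintro ⟨q, hq, hbe, hnD, hD⟩
    obtain ⟨r, hr, h1⟩ := (beA_iff hd hω hC hu hq).mp hbe
    have hge : n + 1 ≤ r + 1 := by
      by_contra hcon
      exact hnD fun k hk => h1.2 k (by omega)
    have hle : r + 1 < n + 2 := by
      by_contra hcon
      exact h1.1 (hD (r + 1) (by omega))
    have : r = n := by omega
    subst this
    exact hr

end SpinalAux

namespace SpinalAux

variable {d m : ℕ} {ω : ℕ → ((Fin m → ZMod d) →+ ZMod d)}

lemma deltaRel_zero {u v : Bd d} : DeltaRel 0 u v ↔ u = v :=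
  ⟨fun h => funext fun k => h k (Nat.zero_le k), fun h k _ => by rw [h]⟩

lemma deltaRel_one (hd : 3 ≤ d) (hω : InOmega d m ω) {C : Set (Bd d)} (hC : Closed C)
    {u v : Bd d} (hu : u ∈ C) (hv : v ∈ C) :
    DeltaRel 1 u v ↔ u = v ∨ (E ω u v ∧ ¬ BEA ω C u v) := by
  constructor
  · intro h
    by_cases huv : u = v
    · exact Or.inl huv
    · right
      have hd1 : Diff1 u v 0 := by
        refine ⟨?_, fun k hk => h k (by omega)⟩
        intro h0
        refine huv (funext fun k => ?_)
        by_cases hk : k = 0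
        · subst hk; exact h0
        · exact h k (by omega)
      refine ⟨E_intro_a hd hd1, ?_⟩
      intro hb
      obtain ⟨r, hr, h1⟩ := (beA_iff hd hω hC hu hv).mp hb
      exact h1.1 (h (r + 1) (by omega))
  · rintro (rfl | ⟨he, hnb⟩)
    · exact fun k _ => rfl
    · by_cases huv : u = v
      · subst huv; exact fun k _ => rfl
      · rcases E_elim hd huv he with h | ⟨r, hr, h1⟩
        · exact fun k hk => h.2 k (by omega)
        · exact absurd ((beA_iff hd hω hC hu hv).mpr ⟨r, hr, h1⟩) hnb

/-! ### transfer along a multiplicity-preserving bijection -/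

section Transfer

variable {C C' : Set (Bd d)}

lemma coe_ne_map (ψ : ↥C ≃ ↥C') {x y : ↥C} (h : (x : Bd d) ≠ (y : Bd d)) :
    ((ψ x : ↥C') : Bd d) ≠ ((ψ y : ↥C') : Bd d) := fun hh =>
  h (congrArg _ (ψ.injective (Subtype.coe_injective hh)))

lemma E_iff_map (ψ : ↥C ≃ ↥C')
    (hψ : ∀ a b : ↥C, mult d m ω (↑a : Bd d) (↑b : Bd d) = mult d m ω ↑(ψ a) ↑(ψ b)) (a b : ↥C) :
    E ω (↑a : Bd d) (↑b : Bd d) ↔ E ω ↑(ψ a) ↑(ψ b) := by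
  unfold E; rw [hψ]

lemma spA_map (ψ : ↥C ≃ ↥C')
    (hψ : ∀ a b : ↥C, mult d m ω (↑a : Bd d) (↑b : Bd d) = mult d m ω ↑(ψ a) ↑(ψ b)) {a : ↥C}
    (h : SpA ω C ↑a) : SpA ω C' ↑(ψ a) := by
  obtain ⟨v, hv, w, hw, h1, h2, h3, e1, e2, e3⟩ := h
  refine ⟨↑(ψ ⟨v, hv⟩), (ψ ⟨v, hv⟩).2, ↑(ψ ⟨w, hw⟩), (ψ ⟨w, hw⟩).2,
    coe_ne_map ψ h1, coe_ne_map ψ h2, coe_ne_map ψ h3,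
    (E_iff_map ψ hψ a ⟨v, hv⟩).mp e1, (E_iff_map ψ hψ a ⟨w, hw⟩).mp e2,
    fun he => e3 ((E_iff_map ψ hψ ⟨v, hv⟩ ⟨w, hw⟩).mpr he)⟩

lemma beA_map (ψ : ↥C ≃ ↥C')
    (hψ : ∀ a b : ↥C, mult d m ω (↑a : Bd d) (↑b : Bd d) = mult d m ω ↑(ψ a) ↑(ψ b)) {a b : ↥C}
    (h : BEA ω C ↑a ↑b) : BEA ω C' ↑(ψ a) ↑(ψ b) := by
  obtain ⟨hne, he, s1, s2, w, hw, h1, h2, s3, e1, e2⟩ := h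
  exact ⟨coe_ne_map ψ hne, (E_iff_map ψ hψ a b).mp he, spA_map ψ hψ s1, spA_map ψ hψ s2,
    ↑(ψ ⟨w, hw⟩), (ψ ⟨w, hw⟩).2, coe_ne_map ψ h1, coe_ne_map ψ h2, spA_map ψ hψ s3,
    (E_iff_map ψ hψ a ⟨w, hw⟩).mp e1, (E_iff_map ψ hψ b ⟨w, hw⟩).mp e2⟩

variable {D D' : Bd d → Bd d → Prop}

lemma bridgedA_map (ψ : ↥C ≃ ↥C')
    (hψ : ∀ a b : ↥C, mult d m ω (↑a : Bd d) (↑b : Bd d) = mult d m ω ↑(ψ a) ↑(ψ b))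
    (hD : ∀ a b : ↥C, D ↑a ↑b ↔ D' ↑(ψ a) ↑(ψ b)) {a b : ↥C}
    (h : BridgedA ω C D ↑a ↑b) : BridgedA ω C' D' ↑(ψ a) ↑(ψ b) := by
  obtain ⟨hnd, p, hp, q, hq, h1, h2, h3⟩ := h
  exact ⟨fun hh => hnd ((hD a b).mpr hh), ↑(ψ ⟨p, hp⟩), (ψ ⟨p, hp⟩).2, ↑(ψ ⟨q, hq⟩),
    (ψ ⟨q, hq⟩).2, (hD a ⟨p, hp⟩).mp h1, (hD b ⟨q, hq⟩).mp h2, beA_map ψ hψ h3⟩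

lemma hsA_map (ψ : ↥C ≃ ↥C')
    (hD : ∀ a b : ↥C, D ↑a ↑b ↔ D' ↑(ψ a) ↑(ψ b))
    (hB : ∀ a b : ↥C, BridgedA ω C D ↑a ↑b ↔ BridgedA ω C' D' ↑(ψ a) ↑(ψ b)) {a : ↥C}
    (h : HSA ω C D ↑a) : HSA ω C' D' ↑(ψ a) := by
  obtain ⟨v, hv, w, hw, b1, b2, hnD, hnB⟩ := h
  exact ⟨↑(ψ ⟨v, hv⟩), (ψ ⟨v, hv⟩).2, ↑(ψ ⟨w, hw⟩), (ψ ⟨w, hw⟩).2,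
    (hB a ⟨v, hv⟩).mp b1, (hB a ⟨w, hw⟩).mp b2,
    fun hh => hnD ((hD ⟨v, hv⟩ ⟨w, hw⟩).mpr hh),
    fun hh => hnB ((hB ⟨v, hv⟩ ⟨w, hw⟩).mpr hh)⟩

lemma adjA_map (ψ : ↥C ≃ ↥C')
    (hD : ∀ a b : ↥C, D ↑a ↑b ↔ D' ↑(ψ a) ↑(ψ b))
    (hB : ∀ a b : ↥C, BridgedA ω C D ↑a ↑b ↔ BridgedA ω C' D' ↑(ψ a) ↑(ψ b))
    (hHS : ∀ a : ↥C, HSA ω C D ↑a ↔ HSA ω C' D' ↑(ψ a)) {a b : ↥C}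
    (h : AdjA ω C D ↑a ↑b) : AdjA ω C' D' ↑(ψ a) ↑(ψ b) := by
  obtain ⟨hb, M, hM, hdis, hnHS⟩ := h
  refine ⟨(hB a b).mp hb, ↑(ψ ⟨M, hM⟩), (ψ ⟨M, hM⟩).2, ?_,
    fun hh => hnHS ((hHS ⟨M, hM⟩).mpr hh)⟩
  rcases hdis with h1 | h1 | ⟨h1, h2⟩
  · exact Or.inl ((hD ⟨M, hM⟩ a).mp h1)
  · exact Or.inr (Or.inl ((hD ⟨M, hM⟩ b).mp h1))
  · exact Or.inr (Or.inr ⟨(hB ⟨M, hM⟩ a).mp h1, (hB ⟨M, hM⟩ b).mp h2⟩)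

end Transfer
end SpinalAux

open SpinalAux in
/-- any isomorphism of rooted, undirected, unlabeled graphs
`(Γ_ξ, ξ) → (Γ_η, η)` maps each `Λ_{ξ'}^n` onto `Λ_{φ(ξ')}^n` and each `Δ_{ξ'}^n` onto
`Δ_{φ(ξ')}^n`. -/
theorem iso_maps_Lambda_and_Delta (d m : ℕ) (hd : 3 ≤ d) (hm : 1 ≤ m)
    (ω : ℕ → ((Fin m → ZMod d) →+ ZMod d)) (hω : InOmega d m ω) (ξ η : Bd d)
    (φ : ↥(Cof ξ) ≃ ↥(Cof η)) (hiso : IsRootedIso d m ω ξ η φ) :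
    ∀ (ξ' : ↥(Cof ξ)) (n : ℕ) (u : ↥(Cof ξ)),
      ((u : Bd d) ∈ LambdaSet d (ξ' : Bd d) n ↔
        (↑(φ u) : Bd d) ∈ LambdaSet d (↑(φ ξ') : Bd d) n) ∧
      ((u : Bd d) ∈ DeltaSet (ξ' : Bd d) n ↔
        (↑(φ u) : Bd d) ∈ DeltaSet (↑(φ ξ') : Bd d) n) := by
  have hC : Closed (Cof ξ) := closed_Cof ξ
  have hC' : Closed (Cof η) := closed_Cof η
  have hmult : ∀ a b : ↥(Cof ξ), mult d m ω (↑a : Bd d) (↑b : Bd d) = mult d m ω ↑(φ a) ↑(φ b) := hiso.2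
  have hmult' : ∀ a b : ↥(Cof η),
      mult d m ω (↑a : Bd d) (↑b : Bd d) = mult d m ω ↑(φ.symm a) ↑(φ.symm b) := by
    intro a b
    have := hiso.2 (φ.symm a) (φ.symm b)
    simpa using this.symm
  have beIff : ∀ a b : ↥(Cof ξ), BEA ω (Cof ξ) ↑a ↑b ↔ BEA ω (Cof η) ↑(φ a) ↑(φ b) := by
    intro a b
    constructor
    · exact beA_map φ hmult
    · intro h
      have := beA_map φ.symm hmult' h
      simpa using this
  -- transfer of the Δ relations, by induction
  have mainD : ∀ n, ∀ a b : ↥(Cof ξ),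
      DeltaRel n (↑a : Bd d) (↑b : Bd d) ↔ DeltaRel n (↑(φ a) : Bd d) (↑(φ b) : Bd d) := by
    have P0 : ∀ a b : ↥(Cof ξ), DeltaRel 0 (↑a : Bd d) (↑b : Bd d) ↔ DeltaRel 0 (↑(φ a) : Bd d) (↑(φ b) : Bd d) := by
      intro a b
      rw [deltaRel_zero, deltaRel_zero]
      constructor
      · intro h
        rw [Subtype.ext h]
      · intro h
        have : φ a = φ b := Subtype.ext h
        rw [φ.injective this]
    have P1 : ∀ a b : ↥(Cof ξ), DeltaRel 1 (↑a : Bd d) (↑b : Bd d) ↔ DeltaRel 1 (↑(φ a) : Bd d) (↑(φ b) : Bd d) := by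
      intro a b
      rw [deltaRel_one hd hω hC a.2 b.2, deltaRel_one hd hω hC' (φ a).2 (φ b).2]
      apply or_congr
      · constructor
        · intro h; rw [Subtype.ext h]
        · intro h; rw [φ.injective (Subtype.ext h)]
      · exact and_congr (E_iff_map φ hmult a b) (not_congr (beIff a b))
    have step : ∀ n, (∀ a b : ↥(Cof ξ),
        DeltaRel (n + 1) (↑a : Bd d) (↑b : Bd d) ↔ DeltaRel (n + 1) (↑(φ a) : Bd d) (↑(φ b) : Bd d)) →
        ∀ a b : ↥(Cof ξ),
        DeltaRel (n + 2) (↑a : Bd d) (↑b : Bd d) ↔ DeltaRel (n + 2) (↑(φ a) : Bd d) (↑(φ b) : Bd d) := by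
      intro n ihD a b
      have ihD' : ∀ a b : ↥(Cof η),
          DeltaRel (n + 1) (↑a : Bd d) (↑b : Bd d) ↔ DeltaRel (n + 1) (↑(φ.symm a) : Bd d) (↑(φ.symm b) : Bd d) := by
        intro a b
        have := ihD (φ.symm a) (φ.symm b)
        simpa using this.symm
      have brIff : ∀ a b : ↥(Cof ξ),
          BridgedA ω (Cof ξ) (DeltaRel (n + 1)) ↑a ↑b ↔
          BridgedA ω (Cof η) (DeltaRel (n + 1)) ↑(φ a) ↑(φ b) := by
        intro a b
        constructor
        · exact bridgedA_map φ hmult ihD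
        · intro h
          have := bridgedA_map φ.symm hmult' ihD' h
          simpa using this
      have brIff' : ∀ a b : ↥(Cof η),
          BridgedA ω (Cof η) (DeltaRel (n + 1)) ↑a ↑b ↔
          BridgedA ω (Cof ξ) (DeltaRel (n + 1)) ↑(φ.symm a) ↑(φ.symm b) := by
        intro a b
        have := brIff (φ.symm a) (φ.symm b)
        simpa using this.symm
      have hsIff : ∀ a : ↥(Cof ξ),
          HSA ω (Cof ξ) (DeltaRel (n + 1)) ↑a ↔
          HSA ω (Cof η) (DeltaRel (n + 1)) ↑(φ a) := by
        intro a
        constructor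
        · exact hsA_map φ ihD brIff
        · intro h
          have := hsA_map φ.symm ihD' brIff' h
          simpa using this
      have adjIff : AdjA ω (Cof ξ) (DeltaRel (n + 1)) ↑a ↑b ↔
          AdjA ω (Cof η) (DeltaRel (n + 1)) ↑(φ a) ↑(φ b) := by
        have hsIff' : ∀ a : ↥(Cof η),
            HSA ω (Cof η) (DeltaRel (n + 1)) ↑a ↔
            HSA ω (Cof ξ) (DeltaRel (n + 1)) ↑(φ.symm a) := by
          intro a
          have := hsIff (φ.symm a)
          simpa using this.symm
        constructor
        · exact adjA_map φ ihD brIff hsIff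
        · intro h
          have := adjA_map φ.symm ihD' brIff' hsIff' h
          simpa using this
      rw [deltaRel_succ_iff, deltaRel_succ_iff,
        ← adjA_iff hd hω hC a.2 b.2 n, ← adjA_iff hd hω hC' (φ a).2 (φ b).2 n]
      exact or_congr (ihD a b) adjIff
    have key : ∀ n, (∀ a b : ↥(Cof ξ),
        DeltaRel n (↑a : Bd d) (↑b : Bd d) ↔ DeltaRel n (↑(φ a) : Bd d) (↑(φ b) : Bd d)) ∧
        (∀ a b : ↥(Cof ξ),
        DeltaRel (n + 1) (↑a : Bd d) (↑b : Bd d) ↔ DeltaRel (n + 1) (↑(φ a) : Bd d) (↑(φ b) : Bd d)) := by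
      intro n
      induction n with
      | zero => exact ⟨P0, P1⟩
      | succ n ih => exact ⟨ih.2, step n ih.2⟩
    exact fun n => (key n).1
  intro ξ' n u
  constructor
  · -- Λ part
    rw [lambda_iff, lambda_iff]
    apply and_congr
    · rw [spinalLev_iff_graph hd hω hC u.2 n, spinalLev_iff_graph hd hω hC' (φ u).2 n]
      constructor
      · rintro ⟨q, hq, h1, h2, h3⟩
        exact ⟨↑(φ ⟨q, hq⟩), (φ ⟨q, hq⟩).2, (beIff u ⟨q, hq⟩).mp h1,
          fun hh => h2 ((mainD (n + 1) u ⟨q, hq⟩).mpr hh),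
          (mainD (n + 2) u ⟨q, hq⟩).mp h3⟩
      · rintro ⟨q, hq, h1, h2, h3⟩
        refine ⟨↑(φ.symm ⟨q, hq⟩), (φ.symm ⟨q, hq⟩).2, ?_, ?_, ?_⟩
        · refine (beIff u (φ.symm ⟨q, hq⟩)).mpr ?_
          simpa using h1
        · intro hh
          refine h2 ?_
          have := (mainD (n + 1) u (φ.symm ⟨q, hq⟩)).mp hh
          simpa using this
        · refine (mainD (n + 2) u (φ.symm ⟨q, hq⟩)).mpr ?_
          simpa using h3
    · exact mainD (n + 2) u ξ'
  · exact mainD n u ξ'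


end
end
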